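/- arXiv:1805.04916 — 6 statements merged into one kernel-verified Lean document; each statement's English description precedes it below -/
import Mathlib

section
/- Let γ be a normalized profile function of length ℓ satisfying the equatorial symmetry γ(t) = γ(ℓ − t) for all t ∈ [0,ℓ], and suppose the Gaussian curvature K(t) = −γ''(t)/γ(t) is monotone non-decreasing on (0, ℓ/2]. Then |Γ(t) + γ'(t)| ≤ γ(t) for every t ∈ (0,ℓ); equivalently, m_γ := sup_{t∈(0,ℓ)} |Γ(t)+γ'(t)|/γ(t) ≤ 1. -/
/-!
Write `F = Γ + γ'`. On `[0, ℓ/2]` it vanishes at both ends (`F 0 = -1 + 1`, and `Γ (ℓ/2) = 0`,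
`γ' (ℓ/2) = 0` by the symmetry), while `F' = γ + γ'' = γ (1 - K)` with `1 - K` non-increasing,
so `F` first increases and then decreases; hence `F ≥ 0` there. Consequently
`(γ² + Γ²)' = 2 γ F ≥ 0`, so `γ² + Γ² ≥ 1` on `[0, ℓ/2]`, and together with `Γ ≤ 0` and
`γ' < 1` this gives `0 ≤ F < 1 + Γ ≤ γ`. The reflection `t ↦ ℓ - t` fixes `γ` and changes the
sign of `F`, which transfers the bound to `[ℓ/2, ℓ)`.
-/

/-- A profile function of length `ℓ`: a `C^∞` function `γ` with `γ(0) = γ(ℓ) = 0`,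
`γ > 0` on `(0,ℓ)`, `γ'(0) = 1`, `γ'(ℓ) = -1`, `|γ'| < 1` on `(0,ℓ)`, and all
even-order derivatives of `γ` vanishing at `t = 0` and `t = ℓ`. -/
structure IsProfileFunction (ℓ : ℝ) (γ : ℝ → ℝ) : Prop where
  ell_pos : 0 < ℓ
  smooth : ContDiff ℝ (⊤ : ℕ∞) γ
  zero_left : γ 0 = 0
  zero_right : γ ℓ = 0
  pos : ∀ t ∈ Set.Ioo 0 ℓ, 0 < γ t
  deriv_left : deriv γ 0 = 1
  deriv_right : deriv γ ℓ = -1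
  abs_deriv_lt_one : ∀ t ∈ Set.Ioo 0 ℓ, |deriv γ t| < 1
  even_deriv_left : ∀ n : ℕ, iteratedDeriv (2 * n) γ 0 = 0
  even_deriv_right : ∀ n : ℕ, iteratedDeriv (2 * n) γ ℓ = 0

/-- The profile function is normalized: `∫₀^ℓ γ(t) dt = 2`, so the associated surface
of revolution has area `4π`. -/
def IsNormalizedProfile (ℓ : ℝ) (γ : ℝ → ℝ) : Prop :=
  (∫ t in (0:ℝ)..ℓ, γ t) = 2

/-- `Γ(t) = -1 + ∫₀^t γ(s) ds`. -/
noncomputable def Gam (γ : ℝ → ℝ) (t : ℝ) : ℝ :=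
  -1 + ∫ s in (0:ℝ)..t, γ s

open Set

theorem le_of_hasDerivAt_nonneg {f f' : ℝ → ℝ} {a b : ℝ} (hab : a ≤ b)
    (hf : ContinuousOn f (Icc a b)) (hf' : ∀ x ∈ Ioo a b, HasDerivAt f (f' x) x)
    (hf'₀ : ∀ x ∈ Ioo a b, 0 ≤ f' x) : f a ≤ f b := by
  refine monotoneOn_of_hasDerivWithinAt_nonneg (convex_Icc a b) hf (f' := f') ?_ ?_
    (left_mem_Icc.2 hab) (right_mem_Icc.2 hab) hab
  · simpa only [interior_Icc] using fun x hx => (hf' x hx).hasDerivWithinAt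
  · simpa only [interior_Icc] using hf'₀

theorem min_le_of_hasDerivAt_eq_mul_antitoneOn {f w h : ℝ → ℝ} {a b : ℝ}
    (hf : ContinuousOn f (Icc a b)) (hf' : ∀ x ∈ Ioo a b, HasDerivAt f (w x * h x) x)
    (hw : ∀ x ∈ Ioo a b, 0 ≤ w x) (hh : AntitoneOn h (Ioo a b)) :
    ∀ t ∈ Icc a b, min (f a) (f b) ≤ f t := by
  intro t ht
  rcases ht.1.eq_or_lt with rfl | hat
  · exact min_le_left _ _
  rcases ht.2.eq_or_lt with rfl | htb
  · exact min_le_right _ _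
  rcases le_or_gt 0 (h t) with hpos | hneg
  · refine (min_le_left _ _).trans <| le_of_hasDerivAt_nonneg hat.le
      (hf.mono (Icc_subset_Icc_right ht.2)) (fun x hx => hf' x ⟨hx.1, hx.2.trans htb⟩) ?_
    intro x hx
    exact mul_nonneg (hw x ⟨hx.1, hx.2.trans htb⟩)
      (hpos.trans (hh ⟨hx.1, hx.2.trans htb⟩ ⟨hat, htb⟩ hx.2.le))
  · have := le_of_hasDerivAt_nonneg htb.le (hf.mono (Icc_subset_Icc_left ht.1)).neg
      (fun x hx => (hf' x ⟨hat.trans hx.1, hx.2⟩).neg) ?_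
    · exact (min_le_right _ _).trans (neg_le_neg_iff.1 this)
    intro x hx
    refine neg_nonneg.2 (mul_nonpos_of_nonneg_of_nonpos (hw x ⟨hat.trans hx.1, hx.2⟩) ?_)
    exact (hh ⟨hat, htb⟩ ⟨hat.trans hx.1, hx.2⟩ hx.1.le).trans hneg.le

theorem add_lt_of_one_le_sq_add_sq {g G d : ℝ} (hg : 0 ≤ g) (hG : G ≤ 0) (hd : d < 1)
    (h : 1 ≤ g ^ 2 + G ^ 2) : G + d < g := by
  suffices 1 + G ≤ g by linarith
  rcases le_or_gt (1 + G) 0 with hneg | hpos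
  · linarith
  · -- `(1 + G)² ≤ (1 + G)(1 - G) ≤ g²`
    exact abs_le_of_sq_le_sq' (by nlinarith) hg |>.2

theorem deriv_sub_eq_neg_of_symm {f : ℝ → ℝ} {ℓ t : ℝ}
    (hsym : ∀ s ∈ Icc 0 ℓ, f s = f (ℓ - s)) (ht : t ∈ Ioo 0 ℓ) :
    deriv f (ℓ - t) = -deriv f t := by
  have hev : f =ᶠ[nhds t] fun s => f (ℓ - s) := by
    filter_upwards [Ioo_mem_nhds ht.1 ht.2] with s hs
    exact hsym s (Ioo_subset_Icc_self hs)
  rw [hev.deriv_eq, deriv_comp_const_sub, neg_neg]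

section Gam

variable {ℓ : ℝ} {γ : ℝ → ℝ}

theorem Gam_zero : Gam γ 0 = -1 := by
  simp [Gam]

theorem hasDerivAt_Gam (hγ : Continuous γ) (t : ℝ) : HasDerivAt (Gam γ) (γ t) t :=
  (intervalIntegral.integral_hasDerivAt_right (hγ.intervalIntegrable 0 t)
    hγ.stronglyMeasurable.stronglyMeasurableAtFilter hγ.continuousAt).const_add (-1)

theorem differentiable_Gam (hγ : Continuous γ) : Differentiable ℝ (Gam γ) :=
  fun t => (hasDerivAt_Gam hγ t).differentiableAt

theorem Gam_sub_eq_neg (hγ : Continuous γ) (hnorm : IsNormalizedProfile ℓ γ)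
    (hsym : ∀ t ∈ Icc 0 ℓ, γ t = γ (ℓ - t)) {t : ℝ} (ht : t ∈ Icc 0 ℓ) :
    Gam γ (ℓ - t) = -Gam γ t := by
  have hreflect : ∫ s in (0 : ℝ)..ℓ - t, γ s = ∫ s in t..ℓ, γ s := by
    have hcongr : ∫ s in (0 : ℝ)..ℓ - t, γ s = ∫ s in (0 : ℝ)..ℓ - t, γ (ℓ - s) := by
      refine intervalIntegral.integral_congr fun s hs => hsym s ?_
      rw [uIcc_of_le (sub_nonneg.2 ht.2)] at hs
      exact ⟨hs.1, hs.2.trans (sub_le_self ℓ ht.1)⟩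
    rw [hcongr, intervalIntegral.integral_comp_sub_left, sub_sub_cancel, sub_zero]
  have hsplit : (∫ s in (0 : ℝ)..t, γ s) + ∫ s in t..ℓ, γ s = 2 := by
    rw [intervalIntegral.integral_add_adjacent_intervals (hγ.intervalIntegrable 0 t)
      (hγ.intervalIntegrable t ℓ), hnorm]
  simp only [Gam]
  linarith

theorem Gam_half (hγ : Continuous γ) (hnorm : IsNormalizedProfile ℓ γ)
    (hsym : ∀ t ∈ Icc 0 ℓ, γ t = γ (ℓ - t)) (hℓ : 0 ≤ ℓ) : Gam γ (ℓ / 2) = 0 := by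
  have := Gam_sub_eq_neg hγ hnorm hsym (t := ℓ / 2) ⟨by linarith, by linarith⟩
  rw [sub_half] at this
  linarith

end Gam

namespace IsProfileFunction

variable {ℓ : ℝ} {γ : ℝ → ℝ}

theorem continuous (hγ : IsProfileFunction ℓ γ) : Continuous γ :=
  hγ.smooth.continuous

theorem differentiable_deriv (hγ : IsProfileFunction ℓ γ) : Differentiable ℝ (deriv γ) :=
  (hγ.smooth.iterate_deriv 1).differentiable (by simp)

theorem nonneg (hγ : IsProfileFunction ℓ γ) : ∀ t ∈ Icc 0 ℓ, 0 ≤ γ t := by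
  intro t ht
  rcases ht.1.eq_or_lt with rfl | h0
  · exact hγ.zero_left.ge
  rcases ht.2.eq_or_lt with rfl | hℓ
  · exact hγ.zero_right.ge
  exact (hγ.pos t ⟨h0, hℓ⟩).le

theorem Gam_le_Gam (hγ : IsProfileFunction ℓ γ) {s t : ℝ} (hs : 0 ≤ s) (hst : s ≤ t)
    (ht : t ≤ ℓ) : Gam γ s ≤ Gam γ t :=
  le_of_hasDerivAt_nonneg hst (differentiable_Gam hγ.continuous).continuous.continuousOn
    (fun x _ => hasDerivAt_Gam hγ.continuous x)
    (fun x hx => hγ.nonneg x ⟨hs.trans hx.1.le, hx.2.le.trans ht⟩)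

theorem Gam_add_deriv_nonneg (hγ : IsProfileFunction ℓ γ) (hnorm : IsNormalizedProfile ℓ γ)
    (hsym : ∀ t ∈ Icc 0 ℓ, γ t = γ (ℓ - t))
    (hK : ∀ s ∈ Ioc 0 (ℓ / 2), ∀ t ∈ Ioc 0 (ℓ / 2), s ≤ t →
      -(deriv (deriv γ) s) / γ s ≤ -(deriv (deriv γ) t) / γ t) :
    ∀ t ∈ Icc 0 (ℓ / 2), 0 ≤ Gam γ t + deriv γ t := by
  have hhalf : ℓ / 2 ∈ Ioo 0 ℓ := ⟨by linarith [hγ.ell_pos], by linarith [hγ.ell_pos]⟩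
  have hF0 : Gam γ 0 + deriv γ 0 = 0 := by rw [Gam_zero, hγ.deriv_left]; norm_num
  have hFhalf : Gam γ (ℓ / 2) + deriv γ (ℓ / 2) = 0 := by
    have hsymm := deriv_sub_eq_neg_of_symm hsym hhalf
    rw [sub_half] at hsymm
    rw [Gam_half hγ.continuous hnorm hsym hγ.ell_pos.le]
    linarith
  have hF' : ∀ x ∈ Ioo 0 (ℓ / 2), HasDerivAt (fun x => Gam γ x + deriv γ x)
      (γ x * (1 - -deriv (deriv γ) x / γ x)) x := by
    intro x hx
    have hx0 : γ x ≠ 0 := (hγ.pos x ⟨hx.1, hx.2.trans hhalf.2⟩).ne'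
    refine ((hasDerivAt_Gam hγ.continuous x).fun_add
      (hγ.differentiable_deriv x).hasDerivAt).congr_deriv ?_
    field_simp
    ring
  have hKanti : AntitoneOn (fun x => 1 - -deriv (deriv γ) x / γ x) (Ioo 0 (ℓ / 2)) :=
    fun s hs t ht hst => sub_le_sub_left (hK s ⟨hs.1, hs.2.le⟩ t ⟨ht.1, ht.2.le⟩ hst) 1
  have hFcont : Continuous fun x => Gam γ x + deriv γ x :=
    (differentiable_Gam hγ.continuous).continuous.add hγ.differentiable_deriv.continuous
  intro t ht
  have := min_le_of_hasDerivAt_eq_mul_antitoneOn hFcont.continuousOn hF'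
    (fun x hx => hγ.nonneg x ⟨hx.1.le, hx.2.le.trans hhalf.2.le⟩) hKanti t ht
  rwa [hF0, hFhalf, min_self] at this

theorem one_le_sq_add_sq_Gam (hγ : IsProfileFunction ℓ γ) {t : ℝ} (ht : t ∈ Icc 0 ℓ)
    (hF : ∀ x ∈ Ioo 0 t, 0 ≤ Gam γ x + deriv γ x) : 1 ≤ γ t ^ 2 + Gam γ t ^ 2 := by
  have hdiff : Differentiable ℝ γ := hγ.smooth.differentiable (by simp)
  have hP : ∀ x, HasDerivAt (fun x => γ x ^ 2 + Gam γ x ^ 2)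
      (2 * γ x * (Gam γ x + deriv γ x)) x := by
    intro x
    refine (((hdiff x).hasDerivAt.fun_pow 2).fun_add
      ((hasDerivAt_Gam hγ.continuous x).fun_pow 2)).congr_deriv ?_
    push_cast
    ring
  have := le_of_hasDerivAt_nonneg ht.1 (fun x _ => (hP x).continuousAt.continuousWithinAt)
    (fun x _ => hP x)
    fun x hx => mul_nonneg
      (mul_nonneg zero_le_two (hγ.nonneg x ⟨hx.1.le, hx.2.le.trans ht.2⟩)) (hF x hx)
  simpa [hγ.zero_left, Gam_zero] using this

theorem abs_Gam_add_deriv_le_of_le_half (hγ : IsProfileFunction ℓ γ)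
    (hnorm : IsNormalizedProfile ℓ γ) (hsym : ∀ t ∈ Icc 0 ℓ, γ t = γ (ℓ - t))
    (hK : ∀ s ∈ Ioc 0 (ℓ / 2), ∀ t ∈ Ioc 0 (ℓ / 2), s ≤ t →
      -(deriv (deriv γ) s) / γ s ≤ -(deriv (deriv γ) t) / γ t) :
    ∀ t ∈ Ioc 0 (ℓ / 2), |Gam γ t + deriv γ t| ≤ γ t := by
  intro t ht
  have hℓ := hγ.ell_pos
  have htℓ : t ∈ Ioo 0 ℓ := ⟨ht.1, by linarith [ht.2]⟩
  have hF := hγ.Gam_add_deriv_nonneg hnorm hsym hK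
  have hsq : 1 ≤ γ t ^ 2 + Gam γ t ^ 2 :=
    hγ.one_le_sq_add_sq_Gam (Ioo_subset_Icc_self htℓ)
      fun x hx => hF x ⟨hx.1.le, hx.2.le.trans ht.2⟩
  have hGam : Gam γ t ≤ 0 :=
    Gam_half hγ.continuous hnorm hsym hℓ.le ▸ hγ.Gam_le_Gam ht.1.le ht.2 (by linarith)
  rw [abs_of_nonneg (hF t ⟨ht.1.le, ht.2⟩)]
  exact (add_lt_of_one_le_sq_add_sq (hγ.pos t htℓ).le hGam
    (abs_lt.1 (hγ.abs_deriv_lt_one t htℓ)).2 hsq).le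

end IsProfileFunction

/-- If a normalized profile function is symmetric with respect to the
equator and its Gaussian curvature `K = -γ''/γ` is non-decreasing on `(0, ℓ/2]`,
then `|Γ t + γ' t| ≤ γ t` on `(0,ℓ)`, i.e. `m_γ ≤ 1`. -/
theorem stmt_1 (ℓ : ℝ) (γ : ℝ → ℝ)
    (hγ : IsProfileFunction ℓ γ) (hnorm : IsNormalizedProfile ℓ γ)
    (hsym : ∀ t ∈ Set.Icc 0 ℓ, γ t = γ (ℓ - t))
    (hK : ∀ s ∈ Set.Ioc 0 (ℓ / 2), ∀ t ∈ Set.Ioc 0 (ℓ / 2), s ≤ t →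
      -(deriv (deriv γ) s) / γ s ≤ -(deriv (deriv γ) t) / γ t) :
    ∀ t ∈ Set.Ioo 0 ℓ, |Gam γ t + deriv γ t| ≤ γ t := by
  have hleft := hγ.abs_Gam_add_deriv_le_of_le_half hnorm hsym hK
  intro t ht
  rcases le_total t (ℓ / 2) with hle | hge
  · exact hleft t ⟨ht.1, hle⟩
  · have hreflect : Gam γ t + deriv γ t = -(Gam γ (ℓ - t) + deriv γ (ℓ - t)) := by
      rw [Gam_sub_eq_neg hγ.continuous hnorm hsym (Ioo_subset_Icc_self ht),
        deriv_sub_eq_neg_of_symm hsym ht, neg_add, neg_neg, neg_neg]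
    rw [hreflect, abs_neg, hsym t (Ioo_subset_Icc_self ht)]
    exact hleft (ℓ - t) ⟨sub_pos.2 ht.2, by linarith⟩
end

section
/- For every δ ∈ (0, π/2) and every ε > 0 there exist ℓ > δ and a normalized profile function γ of length ℓ such that γ''(t) ≤ 0 for all t ∈ [0,ℓ] (i.e., the associated surface of revolution S²_γ is convex) and γ'(δ) < ε. -/
/-!
Take `g t = sin (π / 2 * cos t ^ (2 * k + 1))`. It is even, odd about `π / 2` and strictly
decreasing on `[0, π]`, so its primitive `P` is a concave profile of length `π` (the two
reflection symmetries kill all even derivatives at `0` and `π`), and `c * P (t / c)` is one of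
length `c * π` and area `c ^ 2 * ∫ P`; `c` is chosen to make the area `2`. As `k → ∞`, `g → 0`
on `(0, π / 2]`, so the height `h = P (π / 2)` tends to `0`, while concavity gives
`∫ P ≥ π * h / 8`. Hence the rescaled height `c * h` is `O(√h)`, and by concavity the slope at
`δ` is at most that height divided by `δ`.
-/

open Real Set Filter Topology MeasureTheory intervalIntegral

theorem iteratedDeriv_two_mul_eq_zero_of_map_two_mul_sub {f : ℝ → ℝ} {a : ℝ}
    (hf : ∀ x, f (2 * a - x) = -f x) (n : ℕ) : iteratedDeriv (2 * n) f a = 0 := by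
  have h : iteratedDeriv (2 * n) f a = -iteratedDeriv (2 * n) f a := by
    calc iteratedDeriv (2 * n) f a = iteratedDeriv (2 * n) (fun x => -f (2 * a - x)) a := by
          simp only [hf, neg_neg]
      _ = -iteratedDeriv (2 * n) f a := by
          rw [iteratedDeriv_fun_neg, iteratedDeriv_comp_const_sub]
          simp [two_mul]
  linarith

noncomputable def primitive (g : ℝ → ℝ) (t : ℝ) : ℝ := ∫ s in (0 : ℝ)..t, g s

section

variable {g : ℝ → ℝ}

theorem primitive_zero (g : ℝ → ℝ) : primitive g 0 = 0 := integral_same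

theorem hasDerivAt_primitive (hg : Continuous g) (t : ℝ) :
    HasDerivAt (primitive g) (g t) t :=
  (hg.integral_hasStrictDerivAt 0 t).hasDerivAt

theorem deriv_primitive (hg : Continuous g) : deriv (primitive g) = g :=
  funext fun t => (hasDerivAt_primitive hg t).deriv

theorem continuous_primitive (hg : Continuous g) : Continuous (primitive g) :=
  continuous_iff_continuousAt.2 fun t => (hasDerivAt_primitive hg t).continuousAt

theorem contDiff_primitive (hg : ContDiff ℝ (⊤ : ℕ∞) g) : ContDiff ℝ (⊤ : ℕ∞) (primitive g) :=
  contDiff_infty_iff_deriv.2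
    ⟨fun t => (hasDerivAt_primitive hg.continuous t).differentiableAt,
      by rwa [deriv_primitive hg.continuous]⟩

noncomputable def scaledProfile (g : ℝ → ℝ) (c t : ℝ) : ℝ := c * primitive g (t / c)

theorem hasDerivAt_scaledProfile (hg : Continuous g) {c : ℝ} (hc : c ≠ 0) (t : ℝ) :
    HasDerivAt (scaledProfile g c) (g (t / c)) t := by
  have hlin : HasDerivAt (fun x : ℝ => x / c) c⁻¹ t := by
    simpa using (hasDerivAt_id t).div_const c
  have h := ((hasDerivAt_primitive hg (t / c)).comp t hlin).const_mul c
  rwa [mul_comm (g _), mul_inv_cancel_left₀ hc] at h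

theorem deriv_scaledProfile (hg : Continuous g) {c : ℝ} (hc : c ≠ 0) :
    deriv (scaledProfile g c) = fun t => g (t / c) :=
  funext fun t => (hasDerivAt_scaledProfile hg hc t).deriv

theorem integral_scaledProfile (g : ℝ → ℝ) {c : ℝ} (hc : c ≠ 0) :
    ∫ t in (0 : ℝ)..c * π, scaledProfile g c t = c ^ 2 * ∫ t in (0 : ℝ)..π, primitive g t := by
  simp only [scaledProfile]
  rw [intervalIntegral.integral_const_mul, integral_comp_div _ hc, zero_div,
    mul_div_cancel_left₀ _ hc, smul_eq_mul]
  ring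

end

/-- `g` is the slope `γ'` of a profile function of length `π`, namely of `primitive g`; the
profiles of other lengths are obtained by rescaling. -/
structure IsProfileDerivative (g : ℝ → ℝ) : Prop where
  contDiff : ContDiff ℝ (⊤ : ℕ∞) g
  even : ∀ t, g (-t) = g t
  map_pi_sub : ∀ t, g (π - t) = -g t
  map_zero : g 0 = 1
  strictAntiOn : StrictAntiOn g (Icc 0 π)

namespace IsProfileDerivative

variable {g : ℝ → ℝ}

theorem continuous (hg : IsProfileDerivative g) : Continuous g := hg.contDiff.continuous

theorem map_pi (hg : IsProfileDerivative g) : g π = -1 := by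
  simpa [hg.map_zero] using hg.map_pi_sub 0

theorem map_pi_div_two (hg : IsProfileDerivative g) : g (π / 2) = 0 := by
  have h := hg.map_pi_sub (π / 2)
  rw [sub_half] at h
  linarith

theorem pos (hg : IsProfileDerivative g) {t : ℝ} (ht : t ∈ Ico 0 (π / 2)) : 0 < g t := by
  rw [← hg.map_pi_div_two]
  exact hg.strictAntiOn ⟨ht.1, by linarith [ht.2, pi_pos]⟩ ⟨by positivity, by linarith [pi_pos]⟩
    ht.2

theorem nonneg (hg : IsProfileDerivative g) {t : ℝ} (ht : t ∈ Icc 0 (π / 2)) : 0 ≤ g t := by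
  rw [← hg.map_pi_div_two]
  exact hg.strictAntiOn.antitoneOn ⟨ht.1, by linarith [ht.2, pi_pos]⟩
    ⟨by positivity, by linarith [pi_pos]⟩ ht.2

theorem abs_lt_one (hg : IsProfileDerivative g) {t : ℝ} (ht : t ∈ Ioo 0 π) : |g t| < 1 := by
  have hpi := pi_pos
  refine abs_lt.2 ⟨?_, ?_⟩
  · rw [← hg.map_pi]
    exact hg.strictAntiOn (Ioo_subset_Icc_self ht) ⟨hpi.le, le_rfl⟩ ht.2
  · rw [← hg.map_zero]
    exact hg.strictAntiOn ⟨le_rfl, hpi.le⟩ (Ioo_subset_Icc_self ht) ht.1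

theorem deriv_nonpos (hg : IsProfileDerivative g) {t : ℝ} (ht : t ∈ Icc 0 π) :
    deriv g t ≤ 0 := by
  rw [← (hg.contDiff.differentiable (by simp) t).derivWithin (uniqueDiffOn_Icc pi_pos t ht)]
  exact hg.strictAntiOn.antitoneOn.derivWithin_nonpos

theorem primitive_neg (hg : IsProfileDerivative g) (t : ℝ) :
    primitive g (-t) = -primitive g t := by
  have h := integral_comp_neg (a := 0) (b := t) g
  simp only [hg.even, neg_zero] at h
  rw [primitive, primitive, integral_symm, h]

theorem primitive_pi_sub (hg : IsProfileDerivative g) (t : ℝ) :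
    primitive g (π - t) = primitive g t := by
  have hderiv (x : ℝ) : HasDerivAt (fun x => primitive g (π - x) - primitive g x) 0 x :=
    (((hasDerivAt_primitive hg.continuous (π - x)).comp x
      ((hasDerivAt_id x).const_sub π)).sub (hasDerivAt_primitive hg.continuous x)).congr_deriv
      (by simp [hg.map_pi_sub])
  have h := is_const_of_deriv_eq_zero (fun x => (hderiv x).differentiableAt)
    (fun x => (hderiv x).deriv) t (π / 2)
  rw [sub_half, sub_self] at h
  linarith

theorem primitive_pi (hg : IsProfileDerivative g) : primitive g π = 0 := by
  have h := hg.primitive_pi_sub π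
  rw [sub_self, primitive_zero] at h
  exact h.symm

theorem primitive_two_pi_sub (hg : IsProfileDerivative g) (t : ℝ) :
    primitive g (2 * π - t) = -primitive g t := by
  rw [show 2 * π - t = π - (t - π) by ring, hg.primitive_pi_sub, ← neg_sub, hg.primitive_neg,
    hg.primitive_pi_sub]

theorem primitive_pos (hg : IsProfileDerivative g) {t : ℝ} (ht : t ∈ Ioo 0 π) :
    0 < primitive g t := by
  wlog hle : t ≤ π / 2 generalizing t
  · rw [← hg.primitive_pi_sub]
    exact this ⟨by linarith [ht.2], by linarith [ht.1]⟩ (by linarith)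
  exact intervalIntegral_pos_of_pos_on (hg.continuous.intervalIntegrable 0 t)
    (fun x hx => hg.pos ⟨hx.1.le, hx.2.trans_le hle⟩) ht.1

theorem primitive_nonneg (hg : IsProfileDerivative g) {t : ℝ} (ht : t ∈ Icc 0 π) :
    0 ≤ primitive g t := by
  rcases ht.1.eq_or_lt with rfl | h0
  · exact (primitive_zero g).ge
  rcases ht.2.eq_or_lt with rfl | hπ
  · exact hg.primitive_pi.ge
  exact (hg.primitive_pos ⟨h0, hπ⟩).le

theorem monotoneOn_primitive (hg : IsProfileDerivative g) :
    MonotoneOn (primitive g) (Icc 0 (π / 2)) := by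
  refine monotoneOn_of_deriv_nonneg (convex_Icc _ _)
    (continuous_primitive hg.continuous).continuousOn
    (fun x _ => (hasDerivAt_primitive hg.continuous x).differentiableAt.differentiableWithinAt)
    fun x hx => ?_
  rw [deriv_primitive hg.continuous]
  exact hg.nonneg (interior_subset hx)

theorem primitive_le_primitive_pi_div_two (hg : IsProfileDerivative g) {t : ℝ}
    (ht : t ∈ Icc 0 π) : primitive g t ≤ primitive g (π / 2) := by
  have hpi := pi_pos
  wlog hle : t ≤ π / 2 generalizing t
  · rw [← hg.primitive_pi_sub]
    exact this ⟨by linarith [ht.2], by linarith [ht.1]⟩ (by linarith)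
  exact hg.monotoneOn_primitive ⟨ht.1, hle⟩ ⟨by positivity, le_rfl⟩ hle

theorem concaveOn_primitive (hg : IsProfileDerivative g) : ConcaveOn ℝ (Icc 0 π) (primitive g) :=
  AntitoneOn.concaveOn_of_deriv (convex_Icc _ _)
    (continuous_primitive hg.continuous).continuousOn
    (fun x _ => (hasDerivAt_primitive hg.continuous x).differentiableAt.differentiableWithinAt)
    (by rw [deriv_primitive hg.continuous]; exact hg.strictAntiOn.antitoneOn.mono interior_subset)

theorem mul_le_primitive (hg : IsProfileDerivative g) {t : ℝ} (ht : t ∈ Icc 0 π) :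
    t * g t ≤ primitive g t := by
  have h := integral_mono_on (μ := volume) ht.1 intervalIntegrable_const
    (hg.continuous.intervalIntegrable 0 t)
    fun x hx => hg.strictAntiOn.antitoneOn ⟨hx.1, hx.2.trans ht.2⟩ ht hx.2
  simpa [primitive] using h

theorem integral_primitive_le (hg : IsProfileDerivative g) :
    ∫ t in (0 : ℝ)..π, primitive g t ≤ π * primitive g (π / 2) := by
  have h := integral_mono_on (μ := volume) pi_pos.le
    ((continuous_primitive hg.continuous).intervalIntegrable 0 π) intervalIntegrable_const
    fun t ht => hg.primitive_le_primitive_pi_div_two ht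
  simpa using h

theorem le_integral_primitive (hg : IsProfileDerivative g) :
    π / 8 * primitive g (π / 2) ≤ ∫ t in (0 : ℝ)..π, primitive g t := by
  have hpi := pi_pos
  have hcont := continuous_primitive hg.continuous
  have hhalf : primitive g (π / 2) / 2 ≤ primitive g (π / 4) := by
    have h := hg.concaveOn_primitive.2 (show (0 : ℝ) ∈ Icc 0 π from ⟨le_rfl, hpi.le⟩)
      (show π / 2 ∈ Icc 0 π from ⟨by positivity, by linarith⟩)
      (show (0 : ℝ) ≤ 1 / 2 by norm_num) (show (0 : ℝ) ≤ 1 / 2 by norm_num) (by norm_num)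
    simp only [smul_eq_mul, primitive_zero] at h
    rw [show (1 / 2 : ℝ) * 0 + 1 / 2 * (π / 2) = π / 4 by ring] at h
    linarith
  have hquarter : π / 4 * primitive g (π / 4) ≤ ∫ t in (π / 4)..(π / 2), primitive g t := by
    have h := integral_mono_on (μ := volume) (a := π / 4) (b := π / 2) (by linarith)
      intervalIntegrable_const (hcont.intervalIntegrable _ _)
      fun t ht => hg.monotoneOn_primitive ⟨by linarith [ht.1], by linarith⟩
        ⟨by linarith [ht.1], ht.2⟩ ht.1
    convert h using 1
    simp only [intervalIntegral.integral_const, smul_eq_mul]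
    ring
  have hsub : ∫ t in (π / 4)..(π / 2), primitive g t ≤ ∫ t in (0 : ℝ)..π, primitive g t :=
    integral_mono_interval (by positivity) (by linarith) (by linarith)
      (ae_restrict_of_forall_mem measurableSet_Ioc fun t ht =>
        hg.primitive_nonneg (Ioc_subset_Icc_self ht))
      (hcont.intervalIntegrable _ _)
  nlinarith

theorem isProfileFunction_scaledProfile (hg : IsProfileDerivative g) {c : ℝ} (hc : 0 < c) :
    IsProfileFunction (c * π) (scaledProfile g c) where
  ell_pos := by positivity
  smooth := contDiff_const.mul ((contDiff_primitive hg.contDiff).comp (contDiff_id.div_const c))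
  zero_left := by simp [scaledProfile, primitive_zero]
  zero_right := by simp [scaledProfile, hc.ne', hg.primitive_pi]
  pos t ht := mul_pos hc (hg.primitive_pos ⟨div_pos ht.1 hc, (div_lt_iff₀' hc).2 ht.2⟩)
  deriv_left := by simp [deriv_scaledProfile hg.continuous hc.ne', hg.map_zero]
  deriv_right := by simp [deriv_scaledProfile hg.continuous hc.ne', hc.ne', hg.map_pi]
  abs_deriv_lt_one t ht := by
    rw [deriv_scaledProfile hg.continuous hc.ne']
    exact hg.abs_lt_one ⟨div_pos ht.1 hc, (div_lt_iff₀' hc).2 ht.2⟩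
  even_deriv_left := iteratedDeriv_two_mul_eq_zero_of_map_two_mul_sub fun t => by
    simp [scaledProfile, neg_div, hg.primitive_neg]
  even_deriv_right := iteratedDeriv_two_mul_eq_zero_of_map_two_mul_sub fun t => by
    rw [scaledProfile, scaledProfile, show (2 * (c * π) - t) / c = 2 * π - t / c by field_simp,
      hg.primitive_two_pi_sub, mul_neg]

theorem deriv_deriv_scaledProfile_nonpos (hg : IsProfileDerivative g) {c t : ℝ} (hc : 0 < c)
    (ht : t ∈ Icc 0 (c * π)) : deriv (deriv (scaledProfile g c)) t ≤ 0 := by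
  have hd : HasDerivAt (fun t => g (t / c)) (deriv g (t / c) / c) t := by
    have hlin : HasDerivAt (fun x : ℝ => x / c) c⁻¹ t := by
      simpa using (hasDerivAt_id t).div_const c
    exact (hg.contDiff.differentiable (by simp) (t / c)).hasDerivAt.comp t hlin
  rw [deriv_scaledProfile hg.continuous hc.ne', hd.deriv]
  exact div_nonpos_of_nonpos_of_nonneg
    (hg.deriv_nonpos ⟨div_nonneg ht.1 hc.le, (div_le_iff₀' hc).2 ht.2⟩) hc.le

theorem deriv_scaledProfile_le (hg : IsProfileDerivative g) {c t : ℝ} (hc : 0 < c)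
    (ht : t ∈ Ioc 0 (c * π)) : deriv (scaledProfile g c) t ≤ c * primitive g (π / 2) / t := by
  have hmem : t / c ∈ Icc 0 π := ⟨div_nonneg ht.1.le hc.le, (div_le_iff₀' hc).2 ht.2⟩
  rw [deriv_scaledProfile hg.continuous hc.ne', le_div_iff₀ ht.1]
  calc g (t / c) * t = c * (t / c * g (t / c)) := by field_simp
    _ ≤ c * primitive g (π / 2) := mul_le_mul_of_nonneg_left
        ((hg.mul_le_primitive hmem).trans (hg.primitive_le_primitive_pi_div_two hmem)) hc.le

theorem exists_normalized_concave_profile (hg : IsProfileDerivative g) {δ ε : ℝ}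
    (hδ : δ ∈ Ioo 0 π) (hε : 0 < ε) (h_lt : primitive g (π / 2) < 2 / π)
    (h_lt' : primitive g (π / 2) < π * (ε * δ) ^ 2 / 16) :
    ∃ ℓ : ℝ, ∃ γ : ℝ → ℝ, δ < ℓ ∧ IsProfileFunction ℓ γ ∧ IsNormalizedProfile ℓ γ ∧
      (∀ t ∈ Icc 0 ℓ, deriv (deriv γ) t ≤ 0) ∧ deriv γ δ < ε := by
  set h := primitive g (π / 2)
  set A := ∫ t in (0 : ℝ)..π, primitive g t
  have hpi := pi_pos
  have hh : 0 < h := hg.primitive_pos ⟨by positivity, by linarith⟩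
  have hA_le : A ≤ π * h := hg.integral_primitive_le
  have hA_ge : π / 8 * h ≤ A := hg.le_integral_primitive
  have hA : 0 < A := lt_of_lt_of_le (by positivity) hA_ge
  set c := √(2 / A)
  have hc : 0 < c := sqrt_pos.2 (by positivity)
  have hcA : c ^ 2 * A = 2 := by rw [sq_sqrt (by positivity)]; field_simp
  have hc_gt : 1 < c := by
    have hA2 : A < 2 := by
      calc A ≤ π * h := hA_le
        _ < π * (2 / π) := by gcongr
        _ = 2 := by field_simp
    by_contra! hle
    have : c ^ 2 ≤ 1 := by nlinarith
    nlinarith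
  have hch : c * h < ε * δ := by
    have hsq : π * (c * h) ^ 2 ≤ 16 * h := by
      have h8 : c ^ 2 * (π / 8 * h) ≤ 2 := hcA ▸ mul_le_mul_of_nonneg_left hA_ge (sq_nonneg c)
      nlinarith
    refine lt_of_pow_lt_pow_left₀ 2 (mul_pos hε hδ.1).le ?_
    nlinarith
  refine ⟨c * π, scaledProfile g c, by nlinarith [hδ.2], hg.isProfileFunction_scaledProfile hc,
    ?_, fun t ht => hg.deriv_deriv_scaledProfile_nonpos hc ht, ?_⟩
  · rw [IsNormalizedProfile, integral_scaledProfile g hc.ne', hcA]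
  · calc deriv (scaledProfile g c) δ ≤ c * h / δ :=
          hg.deriv_scaledProfile_le hc ⟨hδ.1, by nlinarith [hδ.2]⟩
      _ < ε := by rw [div_lt_iff₀ hδ.1]; exact hch

end IsProfileDerivative

noncomputable def sinCosPow (k : ℕ) (t : ℝ) : ℝ := sin (π / 2 * cos t ^ (2 * k + 1))

theorem isProfileDerivative_sinCosPow (k : ℕ) : IsProfileDerivative (sinCosPow k) where
  contDiff := contDiff_sin.comp (contDiff_const.mul (contDiff_cos.pow _))
  even t := by simp [sinCosPow]
  map_pi_sub t := by simp [sinCosPow, (odd_two_mul_add_one k).neg_pow]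
  map_zero := by simp [sinCosPow]
  strictAntiOn := by
    have hpow : StrictMono fun x : ℝ => π / 2 * x ^ (2 * k + 1) :=
      (odd_two_mul_add_one k).strictMono_pow.const_mul (by positivity)
    refine (strictMonoOn_sin.comp (hpow.strictMonoOn (Icc (-1) 1)) fun x hx => ?_)
      |>.comp_strictAntiOn strictAntiOn_cos fun t _ => ⟨neg_one_le_cos t, cos_le_one t⟩
    have h := hpow.monotone hx.1
    have h' := hpow.monotone hx.2
    simp only [(odd_two_mul_add_one k).neg_pow, one_pow] at h h'
    exact ⟨by linarith, by linarith⟩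

theorem tendsto_primitive_sinCosPow :
    Tendsto (fun k => primitive (sinCosPow k) (π / 2)) atTop (𝓝 0) := by
  have h := tendsto_integral_filter_of_dominated_convergence (μ := volume) (a := 0) (b := π / 2)
    (l := atTop) (F := fun k : ℕ => sinCosPow k) (f := fun _ => 0) (fun _ => 1)
    (Eventually.of_forall fun k =>
      (isProfileDerivative_sinCosPow k).continuous.aestronglyMeasurable)
    (Eventually.of_forall fun k => ae_of_all _ fun t _ => abs_sin_le_one _)
    intervalIntegrable_const (ae_of_all _ fun t ht => ?_)
  · simpa [primitive] using h
  rw [uIoc_of_le (by positivity)] at ht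
  have hcos_lt : cos t < 1 := by
    simpa using strictAntiOn_cos ⟨le_rfl, pi_pos.le⟩ ⟨ht.1.le, by linarith [ht.2, pi_pos]⟩ ht.1
  have hcos : Tendsto (fun k : ℕ => cos t ^ (2 * k + 1)) atTop (𝓝 0) :=
    (tendsto_pow_atTop_nhds_zero_of_lt_one
      (cos_nonneg_of_mem_Icc ⟨by linarith [ht.1, pi_pos], ht.2⟩) hcos_lt).comp
      (tendsto_atTop_mono (fun k => by simp only [id]; omega) tendsto_id)
  have hsin : Continuous fun x : ℝ => sin (π / 2 * x) := by fun_prop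
  have h := (hsin.tendsto 0).comp hcos
  rwa [mul_zero, sin_zero] at h

/-- For every `δ ∈ (0, π/2)` and `ε > 0` there exist `ℓ > δ` and a
normalized profile function `γ` of length `ℓ` which is concave (`γ'' ≤ 0`, so the
associated surface of revolution is convex) and has `γ' δ < ε`. -/
theorem stmt_3 (δ ε : ℝ) (hδ : δ ∈ Set.Ioo 0 (Real.pi / 2)) (hε : 0 < ε) :
    ∃ ℓ : ℝ, ∃ γ : ℝ → ℝ, δ < ℓ ∧ IsProfileFunction ℓ γ ∧ IsNormalizedProfile ℓ γ ∧
      (∀ t ∈ Set.Icc 0 ℓ, deriv (deriv γ) t ≤ 0) ∧ deriv γ δ < ε := by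
  have hδπ : δ ∈ Ioo 0 π := ⟨hδ.1, hδ.2.trans (half_lt_self pi_pos)⟩
  have hδ0 : 0 < δ := hδ.1
  have hη : 0 < min (2 / π) (π * (ε * δ) ^ 2 / 16) := by positivity
  obtain ⟨k, hk⟩ := (tendsto_primitive_sinCosPow.eventually (gt_mem_nhds hη)).exists
  exact (isProfileDerivative_sinCosPow k).exists_normalized_concave_profile hδπ hε
    (hk.trans_le (min_le_left _ _)) (hk.trans_le (min_le_right _ _))
end

section
/- For every C > 0 there exist ℓ > 0, a normalized profile function γ of length ℓ with γ''(t) ≤ 0 for all t ∈ [0,ℓ] (so the associated surface of revolution S²_γ is convex with total area 4π), and a point t₀ ∈ (0,ℓ) such that |Γ(t₀) + γ'(t₀)| > C·γ(t₀); equivalently, m_γ := sup_{t∈(0,ℓ)} |Γ(t)+γ'(t)|/γ(t) > C. -/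
/-
The profiles are `γ = Γ'` for `Γ(t) = -arcsin (sin θ · cos (ω t)) / θ`, with `θ ∈ (0, π/2)` and
`ω² = θ cot θ`. Then `Γ` runs from `-1` to `1` on `[0, π/ω]`, so `γ` is normalized; the choice
of `ω` makes `γ'(0) = 1`, and `γ''` has the sign of `-sin (ω t)`, so the surface is convex.
As `θ → π/2` the frequency `ω` tends to `0`, so at the phase `ω t₀ = π/3` both `γ(t₀)` and
`γ'(t₀)` tend to `0`, while `Γ(t₀)` tends to `-arcsin (1/2) / (π/2) ≠ 0`.
-/

open Real Set
open scoped ContDiff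

theorem iteratedDeriv_two_mul_eq_zero_of_odd {F : Type*} [NormedAddCommGroup F]
    [NormedSpace ℝ F] {f : ℝ → F} {a : ℝ} (hf : Function.Odd fun x ↦ f (a + x)) (n : ℕ) :
    iteratedDeriv (2 * n) f a = 0 := by
  have h := iteratedDeriv_comp_neg (2 * n) (fun x ↦ f (a + x)) 0
  have hodd : (fun x ↦ f (a + -x)) = fun x ↦ -f (a + x) := funext hf
  rw [hodd, iteratedDeriv_fun_neg, neg_zero, pow_mul, neg_one_sq, one_pow, one_smul,
    iteratedDeriv_comp_const_add] at h
  simp only [add_zero] at h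
  have h2 : (2 : ℝ) • iteratedDeriv (2 * n) f a = 0 := by
    rw [two_smul]; exact neg_eq_iff_add_eq_zero.mp h
  exact (smul_eq_zero.mp h2).resolve_left two_ne_zero

theorem Gam_eq_of_hasDerivAt {γ F : ℝ → ℝ} (hF : ∀ t, HasDerivAt F (γ t) t)
    (hγ : Continuous γ) (hF₀ : F 0 = -1) (t : ℝ) : Gam γ t = F t := by
  rw [Gam, intervalIntegral.integral_eq_sub_of_hasDerivAt (fun x _ ↦ hF x)
    (hγ.intervalIntegrable 0 t), hF₀]
  ring

noncomputable def capShape (k u : ℝ) : ℝ := k * sin u / √(1 - (k * cos u) ^ 2)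

noncomputable def capShapeDeriv (k u : ℝ) : ℝ :=
  k * (1 - k ^ 2) * cos u / ((1 - (k * cos u) ^ 2) * √(1 - (k * cos u) ^ 2))

section
variable {k : ℝ}

theorem one_sub_sq_le_one_sub_mul_cos_sq (u : ℝ) : 1 - k ^ 2 ≤ 1 - (k * cos u) ^ 2 := by
  rw [mul_pow]; nlinarith [cos_sq_le_one u, sq_nonneg k]

theorem one_sub_mul_cos_sq_pos (hk : |k| < 1) (u : ℝ) : 0 < 1 - (k * cos u) ^ 2 :=
  (sub_pos.2 (sq_lt_one_iff_abs_lt_one k |>.2 hk)).trans_le (one_sub_sq_le_one_sub_mul_cos_sq u)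

theorem hasDerivAt_one_sub_mul_cos_sq (k u : ℝ) :
    HasDerivAt (fun u ↦ 1 - (k * cos u) ^ 2) (2 * k ^ 2 * cos u * sin u) u :=
  ((((hasDerivAt_cos u).const_mul k).fun_pow 2).const_sub 1).congr_deriv (by ring)

theorem hasDerivAt_arcsin_mul_cos (hk : |k| < 1) (u : ℝ) :
    HasDerivAt (fun u ↦ arcsin (k * cos u)) (-capShape k u) u := by
  have hD := one_sub_mul_cos_sq_pos hk u
  have hlt : |k * cos u| < 1 := by
    rw [← sq_lt_one_iff_abs_lt_one]
    linarith
  refine ((hasDerivAt_arcsin (abs_lt.1 hlt).1.ne' (abs_lt.1 hlt).2.ne).comp u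
    ((hasDerivAt_cos u).const_mul k)).congr_deriv ?_
  rw [capShape]; ring

theorem hasDerivAt_capShape (hk : |k| < 1) (u : ℝ) :
    HasDerivAt (capShape k) (capShapeDeriv k u) u := by
  have hD := one_sub_mul_cos_sq_pos hk u
  refine (((hasDerivAt_sin u).const_mul k).div
    ((hasDerivAt_one_sub_mul_cos_sq k u).sqrt hD.ne') (sqrt_pos.2 hD).ne').congr_deriv ?_
  rw [capShapeDeriv]
  have hr := sq_sqrt hD.le
  have hr0 := sqrt_pos.2 hD
  generalize √(1 - (k * cos u) ^ 2) = r at hr hr0 ⊢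
  rw [mul_pow] at hD hr
  field_simp
  rw [hr]
  linear_combination (-k ^ 3 * cos u * (1 - k ^ 2 * cos u ^ 2)) * sin_sq_add_cos_sq u

theorem hasDerivAt_capShapeDeriv (hk : |k| < 1) (u : ℝ) :
    HasDerivAt (capShapeDeriv k)
      (-(k * (1 - k ^ 2) * sin u * (1 + 2 * (k * cos u) ^ 2)) /
        ((1 - (k * cos u) ^ 2) ^ 2 * √(1 - (k * cos u) ^ 2))) u := by
  have hD := one_sub_mul_cos_sq_pos hk u
  have hden := hasDerivAt_one_sub_mul_cos_sq k u
  refine (((hasDerivAt_cos u).const_mul (k * (1 - k ^ 2))).div (hden.fun_mul (hden.sqrt hD.ne'))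
    (mul_pos hD (sqrt_pos.2 hD)).ne').congr_deriv ?_
  have hr := sq_sqrt hD.le
  have hr0 := sqrt_pos.2 hD
  generalize √(1 - (k * cos u) ^ 2) = r at hr hr0 ⊢
  rw [mul_pow] at hD hr
  field_simp
  rw [hr]
  ring

theorem deriv_capShape (hk : |k| < 1) : deriv (capShape k) = capShapeDeriv k :=
  funext fun u ↦ (hasDerivAt_capShape hk u).deriv

theorem deriv_capShapeDeriv_nonpos (hk₀ : 0 ≤ k) (hk₁ : k < 1) {u : ℝ} (hu : 0 ≤ sin u) :
    deriv (capShapeDeriv k) u ≤ 0 := by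
  have hk : |k| < 1 := abs_lt.2 ⟨by linarith, hk₁⟩
  have hD := one_sub_mul_cos_sq_pos hk u
  have hk2 : 0 ≤ 1 - k ^ 2 := by nlinarith
  rw [(hasDerivAt_capShapeDeriv hk u).deriv, neg_div]
  exact neg_nonpos.2 (by positivity)

theorem capShapeDeriv_zero (hk : |k| < 1) : capShapeDeriv k 0 = k / √(1 - k ^ 2) := by
  have hD := one_sub_mul_cos_sq_pos hk 0
  simp only [cos_zero, mul_one] at hD
  rw [capShapeDeriv, cos_zero, mul_one, mul_one]
  field_simp

theorem capShapeDeriv_pi (k : ℝ) : capShapeDeriv k π = -capShapeDeriv k 0 := by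
  simp [capShapeDeriv, neg_div]

theorem abs_capShapeDeriv_lt (hk₀ : 0 < k) (hk₁ : k < 1) {u : ℝ} (hu : |cos u| < 1) :
    |capShapeDeriv k u| < capShapeDeriv k 0 := by
  rw [capShapeDeriv_zero (abs_lt.2 ⟨by linarith, hk₁⟩)]
  have hk2 : 0 < 1 - k ^ 2 := by nlinarith
  have hD := one_sub_sq_le_one_sub_mul_cos_sq (k := k) u
  have hD0 : 0 < 1 - (k * cos u) ^ 2 := hk2.trans_le hD
  have hs : √(1 - k ^ 2) ≤ √(1 - (k * cos u) ^ 2) := sqrt_le_sqrt hD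
  have hs0 : 0 < √(1 - k ^ 2) := sqrt_pos.2 hk2
  rw [capShapeDeriv, abs_div, abs_mul, abs_of_pos (by positivity : 0 < k * (1 - k ^ 2)),
    abs_of_pos (by positivity : 0 < (1 - (k * cos u) ^ 2) * √(1 - (k * cos u) ^ 2)),
    div_lt_div_iff₀ (by positivity) hs0]
  calc k * (1 - k ^ 2) * |cos u| * √(1 - k ^ 2) < k * (1 - k ^ 2) * 1 * √(1 - k ^ 2) := by
        gcongr
    _ ≤ k * ((1 - (k * cos u) ^ 2) * √(1 - (k * cos u) ^ 2)) := by
        rw [mul_one, mul_assoc]; gcongr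

theorem capShape_odd (k : ℝ) : Function.Odd (capShape k) := fun u ↦ by
  simp [capShape, neg_div]

theorem capShape_antiperiodic (k : ℝ) : Function.Antiperiodic (capShape k) π := fun u ↦ by
  simp [capShape, sin_add_pi, cos_add_pi, neg_div]

theorem contDiff_capShape (hk : |k| < 1) : ContDiff ℝ ∞ (capShape k) := by
  have hD : ContDiff ℝ ∞ fun u ↦ √(1 - (k * cos u) ^ 2) :=
    (contDiff_const.sub ((contDiff_const.mul contDiff_cos).pow 2)).sqrt
      fun u ↦ (one_sub_mul_cos_sq_pos hk u).ne'
  exact (contDiff_const.mul contDiff_sin).div hD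
    fun u ↦ (sqrt_pos.2 (one_sub_mul_cos_sq_pos hk u)).ne'

end

noncomputable def capFreq (θ : ℝ) : ℝ := √(θ * cos θ / sin θ)

noncomputable def capProfile (θ t : ℝ) : ℝ := capFreq θ / θ * capShape (sin θ) (capFreq θ * t)

section
variable {θ : ℝ}

theorem sin_pos_of_mem_Ioo_pi_div_two (hθ : θ ∈ Ioo 0 (π / 2)) : 0 < sin θ :=
  sin_pos_of_pos_of_lt_pi hθ.1 (by linarith [hθ.2, pi_pos])

theorem cos_pos_of_mem_Ioo_pi_div_two (hθ : θ ∈ Ioo 0 (π / 2)) : 0 < cos θ :=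
  cos_pos_of_mem_Ioo ⟨by linarith [hθ.1, pi_pos], hθ.2⟩

theorem abs_sin_lt_one_of_mem_Ioo_pi_div_two (hθ : θ ∈ Ioo 0 (π / 2)) : |sin θ| < 1 := by
  rw [← sq_lt_one_iff_abs_lt_one]
  nlinarith [sin_sq_add_cos_sq θ, cos_pos_of_mem_Ioo_pi_div_two hθ]

theorem capFreq_sq (hθ : θ ∈ Ioo 0 (π / 2)) : capFreq θ ^ 2 = θ * cos θ / sin θ :=
  sq_sqrt (div_pos (mul_pos hθ.1 (cos_pos_of_mem_Ioo_pi_div_two hθ))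
    (sin_pos_of_mem_Ioo_pi_div_two hθ)).le

theorem capFreq_pos (hθ : θ ∈ Ioo 0 (π / 2)) : 0 < capFreq θ :=
  sqrt_pos.2 (div_pos (mul_pos hθ.1 (cos_pos_of_mem_Ioo_pi_div_two hθ))
    (sin_pos_of_mem_Ioo_pi_div_two hθ))

theorem deriv_capProfile (hθ : θ ∈ Ioo 0 (π / 2)) :
    deriv (capProfile θ) =
      fun t ↦ capFreq θ / θ * (capFreq θ * capShapeDeriv (sin θ) (capFreq θ * t)) := by
  ext t
  unfold capProfile
  simp [deriv_const_mul_field', deriv_comp_mul_left,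
    deriv_capShape (abs_sin_lt_one_of_mem_Ioo_pi_div_two hθ)]

theorem deriv_deriv_capProfile (hθ : θ ∈ Ioo 0 (π / 2)) (t : ℝ) :
    deriv (deriv (capProfile θ)) t = capFreq θ / θ *
      (capFreq θ * (capFreq θ * deriv (capShapeDeriv (sin θ)) (capFreq θ * t))) := by
  rw [deriv_capProfile hθ]
  simp [deriv_const_mul_field', deriv_comp_mul_left]

theorem capFreq_mul_mem_Icc (hθ : θ ∈ Ioo 0 (π / 2)) {t : ℝ}
    (ht : t ∈ Icc 0 (π / capFreq θ)) : capFreq θ * t ∈ Icc 0 π := by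
  have hω := capFreq_pos hθ
  exact ⟨mul_nonneg hω.le ht.1, by rw [mul_comm, ← le_div_iff₀ hω]; exact ht.2⟩

theorem capFreq_mul_mem_Ioo (hθ : θ ∈ Ioo 0 (π / 2)) {t : ℝ}
    (ht : t ∈ Ioo 0 (π / capFreq θ)) : capFreq θ * t ∈ Ioo 0 π := by
  have hω := capFreq_pos hθ
  exact ⟨mul_pos hω ht.1, by rw [mul_comm, ← lt_div_iff₀ hω]; exact ht.2⟩

theorem capFreq_div_mul_capShapeDeriv_zero (hθ : θ ∈ Ioo 0 (π / 2)) :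
    capFreq θ / θ * (capFreq θ * capShapeDeriv (sin θ) 0) = 1 := by
  have hc := cos_pos_of_mem_Ioo_pi_div_two hθ
  have hs := sin_pos_of_mem_Ioo_pi_div_two hθ
  rw [capShapeDeriv_zero (abs_sin_lt_one_of_mem_Ioo_pi_div_two hθ), ← cos_eq_sqrt_one_sub_sin_sq
    (by linarith [hθ.1, pi_pos]) hθ.2.le, ← mul_assoc, div_mul_eq_mul_div, ← sq, capFreq_sq hθ]
  field_simp [hθ.1.ne']

theorem contDiff_capProfile (hθ : θ ∈ Ioo 0 (π / 2)) : ContDiff ℝ ∞ (capProfile θ) :=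
  contDiff_const.mul ((contDiff_capShape (abs_sin_lt_one_of_mem_Ioo_pi_div_two hθ)).comp
    (contDiff_const.mul contDiff_id))

theorem Gam_capProfile (hθ : θ ∈ Ioo 0 (π / 2)) (t : ℝ) :
    Gam (capProfile θ) t = -arcsin (sin θ * cos (capFreq θ * t)) / θ := by
  have hF (t : ℝ) : HasDerivAt (fun t ↦ -arcsin (sin θ * cos (capFreq θ * t)) / θ)
      (capProfile θ t) t := by
    refine (((hasDerivAt_arcsin_mul_cos (abs_sin_lt_one_of_mem_Ioo_pi_div_two hθ) _).comp t
      (hasDerivAt_const_mul (capFreq θ))).neg.div_const θ).congr_deriv ?_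
    rw [capProfile]; ring
  refine Gam_eq_of_hasDerivAt hF (contDiff_capProfile hθ).continuous ?_ t
  rw [mul_zero, cos_zero, mul_one, arcsin_sin (by linarith [hθ.1, pi_pos]) hθ.2.le]
  field_simp [hθ.1.ne']

theorem capProfile_odd_zero (θ : ℝ) : Function.Odd fun x ↦ capProfile θ (0 + x) := fun x ↦ by
  simp [capProfile, capShape_odd _ _]

theorem capProfile_odd_pi (hθ : θ ∈ Ioo 0 (π / 2)) :
    Function.Odd fun x ↦ capProfile θ (π / capFreq θ + x) := fun x ↦ by
  simp only [capProfile, mul_add, mul_div_cancel₀ _ (capFreq_pos hθ).ne', add_comm π,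
    capShape_antiperiodic _ _, mul_neg, capShape_odd _ _, neg_neg]

theorem isProfileFunction_capProfile (hθ : θ ∈ Ioo 0 (π / 2)) :
    IsProfileFunction (π / capFreq θ) (capProfile θ) where
  ell_pos := div_pos pi_pos (capFreq_pos hθ)
  smooth := contDiff_capProfile hθ
  zero_left := by simp [capProfile, capShape]
  zero_right := by simp [capProfile, capShape, mul_div_cancel₀ _ (capFreq_pos hθ).ne']
  pos t ht := by
    have hu := capFreq_mul_mem_Ioo hθ ht
    have hsin := sin_pos_of_pos_of_lt_pi hu.1 hu.2
    have hk := sin_pos_of_mem_Ioo_pi_div_two hθ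
    have hD := one_sub_mul_cos_sq_pos (abs_sin_lt_one_of_mem_Ioo_pi_div_two hθ) (capFreq θ * t)
    have := capFreq_pos hθ
    have := hθ.1
    rw [capProfile, capShape]
    positivity
  deriv_left := by
    simp only [deriv_capProfile hθ, mul_zero, capFreq_div_mul_capShapeDeriv_zero hθ]
  deriv_right := by
    simp only [deriv_capProfile hθ, mul_div_cancel₀ _ (capFreq_pos hθ).ne', capShapeDeriv_pi,
      mul_neg, capFreq_div_mul_capShapeDeriv_zero hθ]
  abs_deriv_lt_one t ht := by
    have hu := capFreq_mul_mem_Ioo hθ ht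
    have hcos : |cos (capFreq θ * t)| < 1 := by
      rw [← sq_lt_one_iff_abs_lt_one]
      nlinarith [sin_pos_of_pos_of_lt_pi hu.1 hu.2, sin_sq_add_cos_sq (capFreq θ * t)]
    have hk := sin_pos_of_mem_Ioo_pi_div_two hθ
    have hlt := abs_capShapeDeriv_lt hk (abs_lt.1 (abs_sin_lt_one_of_mem_Ioo_pi_div_two hθ)).2 hcos
    have hω := capFreq_pos hθ
    have := hθ.1
    rw [deriv_capProfile hθ, ← capFreq_div_mul_capShapeDeriv_zero hθ, abs_mul, abs_mul,
      abs_of_pos (by positivity : 0 < capFreq θ / θ), abs_of_pos hω]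
    gcongr
  even_deriv_left := iteratedDeriv_two_mul_eq_zero_of_odd (capProfile_odd_zero θ)
  even_deriv_right := iteratedDeriv_two_mul_eq_zero_of_odd (capProfile_odd_pi hθ)

theorem isNormalizedProfile_capProfile (hθ : θ ∈ Ioo 0 (π / 2)) :
    IsNormalizedProfile (π / capFreq θ) (capProfile θ) := by
  have h := Gam_capProfile hθ (π / capFreq θ)
  rw [mul_div_cancel₀ _ (capFreq_pos hθ).ne', cos_pi, mul_neg_one, arcsin_neg,
    arcsin_sin (by linarith [hθ.1, pi_pos]) hθ.2.le, neg_neg, div_self hθ.1.ne', Gam] at h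
  rw [IsNormalizedProfile]
  linarith

theorem deriv_deriv_capProfile_nonpos (hθ : θ ∈ Ioo 0 (π / 2)) {t : ℝ}
    (ht : t ∈ Icc 0 (π / capFreq θ)) : deriv (deriv (capProfile θ)) t ≤ 0 := by
  have hu := capFreq_mul_mem_Icc hθ ht
  have hk := sin_pos_of_mem_Ioo_pi_div_two hθ
  have h := deriv_capShapeDeriv_nonpos hk.le (abs_lt.1 (abs_sin_lt_one_of_mem_Ioo_pi_div_two hθ)).2
    (sin_nonneg_of_nonneg_of_le_pi hu.1 hu.2)
  have hω := capFreq_pos hθ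
  have := hθ.1
  rw [deriv_deriv_capProfile hθ]
  exact mul_nonpos_of_nonneg_of_nonpos (by positivity)
    (mul_nonpos_of_nonneg_of_nonpos hω.le (mul_nonpos_of_nonneg_of_nonpos hω.le h))

theorem exists_lt_abs_Gam_add_deriv_capProfile (C : ℝ) :
    ∃ θ ∈ Ioo 0 (π / 2), C * capProfile θ (π / capFreq θ / 3) <
      |Gam (capProfile θ) (π / capFreq θ / 3) + deriv (capProfile θ) (π / capFreq θ / 3)| := by
  have hγ : ContinuousAt (fun θ ↦ C * (capFreq θ / θ * capShape (sin θ) (π / 3))) (π / 2) := by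
    unfold capFreq capShape
    fun_prop (disch := first | positivity | norm_num)
  have hΓ : ContinuousAt (fun θ ↦ |-arcsin (sin θ * cos (π / 3)) / θ +
      capFreq θ / θ * (capFreq θ * capShapeDeriv (sin θ) (π / 3))|) (π / 2) := by
    unfold capFreq capShapeDeriv
    fun_prop (disch := first | positivity | norm_num)
  have hlim : C * (capFreq (π / 2) / (π / 2) * capShape (sin (π / 2)) (π / 3)) <
      |-arcsin (sin (π / 2) * cos (π / 3)) / (π / 2) +
        capFreq (π / 2) / (π / 2) * (capFreq (π / 2) * capShapeDeriv (sin (π / 2)) (π / 3))| := by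
    simp [capFreq, cos_pi_div_three, pi_pos.ne']
  obtain ⟨θ, hlt, hθ⟩ := ((hγ.eventually_lt hΓ hlim).filter_mono nhdsWithin_le_nhds |>.and
    (Ioo_mem_nhdsLT pi_div_two_pos)).exists
  have ht₀ : capFreq θ * (π / capFreq θ / 3) = π / 3 := by field_simp [(capFreq_pos hθ).ne']
  refine ⟨θ, hθ, ?_⟩
  simpa only [Gam_capProfile hθ, deriv_capProfile hθ, capProfile, ht₀] using hlt

end

theorem stmt_5_general (C : ℝ) :
    ∃ ℓ : ℝ, ∃ γ : ℝ → ℝ, 0 < ℓ ∧ IsProfileFunction ℓ γ ∧ IsNormalizedProfile ℓ γ ∧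
      (∀ t ∈ Set.Icc 0 ℓ, deriv (deriv γ) t ≤ 0) ∧
      ∃ t₀ ∈ Set.Ioo 0 ℓ, C * γ t₀ < |Gam γ t₀ + deriv γ t₀| := by
  obtain ⟨θ, hθ, hlt⟩ := exists_lt_abs_Gam_add_deriv_capProfile C
  have hγ := isProfileFunction_capProfile hθ
  refine ⟨π / capFreq θ, capProfile θ, hγ.ell_pos, hγ, isNormalizedProfile_capProfile hθ,
    fun t ht ↦ deriv_deriv_capProfile_nonpos hθ ht, π / capFreq θ / 3, ⟨?_, ?_⟩, hlt⟩ <;>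
  linarith [hγ.ell_pos]

/-- For every `C > 0` there is a normalized, concave (i.e. convex surface)
profile function `γ` of some length `ℓ > 0` and a point `t₀ ∈ (0,ℓ)` with
`|Γ t₀ + γ' t₀| > C * γ t₀`, i.e. `m_γ > C`. -/
theorem stmt_5 (C : ℝ) (hC : 0 < C) :
    ∃ ℓ : ℝ, ∃ γ : ℝ → ℝ, 0 < ℓ ∧ IsProfileFunction ℓ γ ∧ IsNormalizedProfile ℓ γ ∧
      (∀ t ∈ Set.Icc 0 ℓ, deriv (deriv γ) t ≤ 0) ∧
      ∃ t₀ ∈ Set.Ioo 0 ℓ, C * γ t₀ < |Gam γ t₀ + deriv γ t₀| :=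
  stmt_5_general C
end

section
/- For every ε ∈ (0,1) and every δ ∈ (0, π/2) there exist ℓ > δ and a normalized profile function γ of length ℓ such that γ'(δ) < −ε. -/
open Real Set intervalIntegral

section OddFunction

variable {f : ℝ → ℝ}

lemma Function.Odd.iteratedDeriv_two_mul_neg (hf : f.Odd) (n : ℕ) (a : ℝ) :
    iteratedDeriv (2 * n) f (-a) = -iteratedDeriv (2 * n) f a := by
  have h := iteratedDeriv_comp_neg (2 * n) f a
  rw [show (fun x ↦ f (-x)) = -f from funext hf, iteratedDeriv_neg] at h
  simpa [pow_mul] using h.symm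

lemma Function.Odd.iteratedDeriv_two_mul_zero (hf : f.Odd) (n : ℕ) :
    iteratedDeriv (2 * n) f 0 = 0 := by
  simpa [self_eq_neg] using hf.iteratedDeriv_two_mul_neg n 0

lemma Function.Odd.iteratedDeriv_two_mul_half_period (hf : f.Odd) {c : ℝ}
    (hc : Function.Periodic f c) (n : ℕ) : iteratedDeriv (2 * n) f (c / 2) = 0 := by
  have hper := congrFun (iteratedDeriv_comp_add_const (2 * n) f c) (-(c / 2))
  rw [show (fun z ↦ f (z + c)) = f from funext hc, hf.iteratedDeriv_two_mul_neg,
    show -(c / 2) + c = c / 2 by ring] at hper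
  simpa [neg_eq_self] using hper

end OddFunction

lemma integral_sin_mul_comp_cos {F : ℝ → ℝ} (hF : Continuous F) :
    ∫ t in 0..π, sin t * F (cos t) = ∫ x in (-1)..1, F x := by
  have h := integral_comp_mul_deriv (a := 0) (b := π) (fun t _ ↦ hasDerivAt_cos t)
    continuous_sin.neg.continuousOn hF
  rw [cos_zero, cos_pi, integral_symm (-1) 1] at h
  simp only [Function.comp_apply, mul_neg, integral_neg, neg_inj] at h
  simpa only [mul_comm] using h

lemma integral_one_sub_sq : ∫ x in (-1 : ℝ)..1, (1 - x ^ 2) = 4 / 3 := by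
  rw [integral_sub intervalIntegrable_const (intervalIntegrable_pow _)]
  norm_num [integral_pow]

lemma intervalIntegrable_one_sub_sq_mul {g : ℝ → ℝ} (hg : Continuous g) (a b : ℝ) :
    IntervalIntegrable (fun x ↦ (1 - x ^ 2) * g x) MeasureTheory.volume a b :=
  (by fun_prop : Continuous fun x : ℝ ↦ (1 - x ^ 2) * g x).intervalIntegrable a b

lemma cos_mem_Ioo_of_mem_Ioo {t : ℝ} (ht : t ∈ Ioo 0 π) : cos t ∈ Ioo (-1) 1 := by
  constructor
  · simpa using cos_lt_cos_of_nonneg_of_le_pi ht.1.le le_rfl ht.2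
  · simpa using cos_lt_cos_of_nonneg_of_le_pi le_rfl ht.2.le ht.1

lemma abs_cubic_term_le {x H η : ℝ} (hx : x ∈ Icc (-1) 1) (hH : |H| ≤ η) :
    |3 * x * (1 - x ^ 2) * H| ≤ 3 * η * (1 - x ^ 2) := by
  have hweight : 0 ≤ 1 - x ^ 2 := by nlinarith [hx.1, hx.2]
  rw [abs_mul, abs_mul, abs_of_nonneg hweight, abs_mul, abs_of_pos three_pos]
  calc 3 * |x| * (1 - x ^ 2) * |H| ≤ 3 * 1 * (1 - x ^ 2) * η := by
        gcongr; exact abs_le.mpr hx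
    _ = 3 * η * (1 - x ^ 2) := by ring

noncomputable def profileOf (h : ℝ → ℝ) (t : ℝ) : ℝ := sin t + sin t ^ 3 * h (cos t)

noncomputable def profileSlope (h : ℝ → ℝ) (x : ℝ) : ℝ :=
  x + 3 * x * (1 - x ^ 2) * h x - (1 - x ^ 2) ^ 2 * deriv h x

section Profile

variable {h : ℝ → ℝ}

lemma hasDerivAt_profileOf (hh : Differentiable ℝ h) (t : ℝ) :
    HasDerivAt (profileOf h) (profileSlope h (cos t)) t := by
  have hd := (hasDerivAt_sin t).fun_add (((hasDerivAt_sin t).fun_pow 3).fun_mul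
    ((hh (cos t)).hasDerivAt.comp t (hasDerivAt_cos t)))
  refine hd.congr_deriv ?_
  simp only [profileSlope, Function.comp_apply]
  linear_combination
    (3 * cos t * h (cos t) - deriv h (cos t) * (1 - cos t ^ 2 + sin t ^ 2)) * sin_sq_add_cos_sq t

lemma deriv_profileOf (hh : Differentiable ℝ h) (t : ℝ) :
    deriv (profileOf h) t = profileSlope h (cos t) :=
  (hasDerivAt_profileOf hh t).deriv

lemma profileSlope_one : profileSlope h 1 = 1 := by
  simp [profileSlope]

lemma profileSlope_neg_one : profileSlope h (-1) = -1 := by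
  simp [profileSlope]

lemma profileOf_odd : (profileOf h).Odd := fun t ↦ by
  simp only [profileOf, sin_neg, cos_neg]
  ring

lemma profileOf_periodic : Function.Periodic (profileOf h) (2 * π) := fun t ↦ by
  simp only [profileOf, sin_add_two_pi, cos_add_two_pi]

lemma integral_profileOf (hh : Continuous h) :
    ∫ t in 0..π, profileOf h t = 2 + ∫ x in (-1)..1, (1 - x ^ 2) * h x := by
  have hF : Continuous fun x : ℝ ↦ 1 + (1 - x ^ 2) * h x := by fun_prop
  have hpoint (t : ℝ) : profileOf h t = sin t * (1 + (1 - cos t ^ 2) * h (cos t)) := by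
    rw [profileOf, ← sin_sq]
    ring
  simp_rw [hpoint]
  rw [integral_sin_mul_comp_cos hF,
    integral_add intervalIntegrable_const (intervalIntegrable_one_sub_sq_mul hh _ _)]
  norm_num

lemma profileOf_pos (hh : ∀ x ∈ Ioo (-1) 1, -1 < h x) {t : ℝ} (ht : t ∈ Ioo 0 π) :
    0 < profileOf h t := by
  have hsin : 0 < sin t := sin_pos_of_pos_of_lt_pi ht.1 ht.2
  have hfactor : 0 < 1 + sin t ^ 2 * h (cos t) := by
    have := hh _ (cos_mem_Ioo_of_mem_Ioo ht)
    nlinarith [sin_sq_le_one t, pow_pos hsin 2]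
  rw [profileOf, show sin t + sin t ^ 3 * h (cos t) = sin t * (1 + sin t ^ 2 * h (cos t)) by ring]
  positivity

theorem isProfileFunction_profileOf (hh : ContDiff ℝ (⊤ : ℕ∞) h) (hgt : ∀ x ∈ Ioo (-1) 1, -1 < h x)
    (hslope : ∀ x ∈ Ioo (-1) 1, |profileSlope h x| < 1) : IsProfileFunction π (profileOf h) where
  ell_pos := pi_pos
  smooth := contDiff_sin.add ((contDiff_sin.pow 3).mul (hh.comp contDiff_cos))
  zero_left := by simp [profileOf]
  zero_right := by simp [profileOf]
  pos _ := profileOf_pos hgt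
  deriv_left := by rw [deriv_profileOf (hh.differentiable (by simp)), cos_zero, profileSlope_one]
  deriv_right := by rw [deriv_profileOf (hh.differentiable (by simp)), cos_pi, profileSlope_neg_one]
  abs_deriv_lt_one t ht := by
    rw [deriv_profileOf (hh.differentiable (by simp))]
    exact hslope _ (cos_mem_Ioo_of_mem_Ioo ht)
  even_deriv_left := profileOf_odd.iteratedDeriv_two_mul_zero
  even_deriv_right n := by
    simpa using profileOf_odd.iteratedDeriv_two_mul_half_period profileOf_periodic n

lemma abs_profileSlope_lt_one {η x : ℝ} (hx : x ∈ Ioo (-1) 1) (hη : η < 1 / 6)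
    (hh : |h x| ≤ η) (hderiv : 0 ≤ deriv h x)
    (hslope : (1 - x ^ 2) ^ 2 * deriv h x < 1 + x - 3 * η * (1 - x ^ 2)) :
    |profileSlope h x| < 1 := by
  obtain ⟨hlow, hup⟩ := abs_le.mp (abs_cubic_term_le (Ioo_subset_Icc_self hx) hh)
  obtain ⟨hx₁, hx₂⟩ := hx
  rw [profileSlope, abs_lt]
  constructor
  · linarith
  · have hη₀ : 0 ≤ η := (abs_nonneg _).trans hh
    have : 3 * η * (1 + x) < 1 := by nlinarith
    nlinarith [mul_nonneg (sq_nonneg (1 - x ^ 2)) hderiv,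
      mul_pos (sub_pos.mpr hx₂) (sub_pos.mpr this)]

end Profile

noncomputable def arctanStep (k y : ℝ) : ℝ := 1 / 2 + arctan (k * y) / π

section ArctanStep

variable (k : ℝ)

lemma hasDerivAt_arctanStep (y : ℝ) :
    HasDerivAt (arctanStep k) (k / (π * (1 + (k * y) ^ 2))) y := by
  have h := ((((hasDerivAt_id y).const_mul k).arctan).div_const π).const_add (1 / 2)
  refine h.congr_deriv ?_
  simp only [id, mul_one]
  field_simp

lemma deriv_arctanStep (y : ℝ) : deriv (arctanStep k) y = k / (π * (1 + (k * y) ^ 2)) :=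
  (hasDerivAt_arctanStep k y).deriv

lemma contDiff_arctanStep : ContDiff ℝ (⊤ : ℕ∞) (arctanStep k) :=
  contDiff_const.add ((contDiff_arctan.comp (contDiff_const.mul contDiff_id)).div_const _)

lemma arctanStep_mem_Ioo (y : ℝ) : arctanStep k y ∈ Ioo 0 1 := by
  have hlt : arctan (k * y) / π < 1 / 2 := by
    rw [div_lt_iff₀ pi_pos]
    linarith [arctan_lt_pi_div_two (k * y)]
  have hgt : -(1 / 2) < arctan (k * y) / π := by
    rw [lt_div_iff₀ pi_pos]
    linarith [neg_pi_div_two_lt_arctan (k * y)]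
  constructor <;> rw [arctanStep] <;> linarith

variable {k}

lemma deriv_arctanStep_nonneg (hk : 0 ≤ k) (y : ℝ) : 0 ≤ deriv (arctanStep k) y := by
  rw [deriv_arctanStep]
  positivity

lemma deriv_arctanStep_le (hk : 0 ≤ k) (y : ℝ) : deriv (arctanStep k) y ≤ k / π := by
  rw [deriv_arctanStep]
  gcongr
  nlinarith [sq_nonneg (k * y), pi_pos]

lemma abs_mul_deriv_arctanStep_le (hk : 0 ≤ k) (y : ℝ) :
    |y| * deriv (arctanStep k) y ≤ 1 / (2 * π) := by
  rw [deriv_arctanStep, mul_div_assoc', div_le_div_iff₀ (by positivity) (by positivity)]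
  rw [← sq_abs (k * y), abs_mul, abs_of_nonneg hk]
  nlinarith [mul_nonneg pi_pos.le (sq_nonneg (k * |y| - 1))]

lemma sq_mul_deriv_arctanStep_le (hk : 0 < k) (y : ℝ) :
    y ^ 2 * deriv (arctanStep k) y ≤ 1 / (π * k) := by
  rw [deriv_arctanStep, mul_div_assoc', div_le_div_iff₀ (by positivity) (by positivity)]
  nlinarith [pi_pos, mul_pos pi_pos hk]

end ArctanStep

noncomputable def parabolicMean (g : ℝ → ℝ) : ℝ := 3 / 4 * ∫ x in (-1)..1, (1 - x ^ 2) * g x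

section ParabolicMean

variable {g : ℝ → ℝ}

lemma integral_one_sub_sq_mul_sub_parabolicMean (hg : Continuous g) :
    ∫ x in (-1)..1, (1 - x ^ 2) * (g x - parabolicMean g) = 0 := by
  simp_rw [mul_sub]
  rw [integral_sub (intervalIntegrable_one_sub_sq_mul hg _ _)
    (intervalIntegrable_one_sub_sq_mul continuous_const _ _), integral_mul_const,
    integral_one_sub_sq, parabolicMean]
  ring

lemma parabolicMean_mem_Icc (hg : Continuous g) {a b : ℝ}
    (hab : ∀ x ∈ Icc (-1) 1, g x ∈ Icc a b) : parabolicMean g ∈ Icc a b := by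
  have hconst (c : ℝ) : ∫ x in (-1 : ℝ)..1, (1 - x ^ 2) * c = 4 / 3 * c := by
    rw [integral_mul_const, integral_one_sub_sq]
  have hweight {x : ℝ} (hx : x ∈ Icc (-1 : ℝ) 1) : 0 ≤ 1 - x ^ 2 := by nlinarith [hx.1, hx.2]
  have hlow := integral_mono_on (by norm_num)
    (intervalIntegrable_one_sub_sq_mul continuous_const _ _)
    (intervalIntegrable_one_sub_sq_mul hg _ _)
    fun x hx ↦ mul_le_mul_of_nonneg_left (hab x hx).1 (hweight hx)
  have hup := integral_mono_on (by norm_num) (intervalIntegrable_one_sub_sq_mul hg _ _)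
    (intervalIntegrable_one_sub_sq_mul continuous_const _ _)
    fun x hx ↦ mul_le_mul_of_nonneg_left (hab x hx).2 (hweight hx)
  rw [hconst] at hlow hup
  constructor <;> rw [parabolicMean] <;> linarith

end ParabolicMean

lemma one_sub_sq_sq_le {x x₀ : ℝ} (hx : x ∈ Icc (-1) 1) (hx₀ : x₀ ∈ Icc (-1) 1) :
    (1 - x ^ 2) ^ 2 ≤ (1 - x₀ ^ 2) ^ 2 + 4 * |x - x₀| := by
  have hdiff : (1 - x ^ 2) ^ 2 - (1 - x₀ ^ 2) ^ 2 = (x - x₀) * (x + x₀) * (x ^ 2 + x₀ ^ 2 - 2) := by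
    ring
  have hsum : |x + x₀| ≤ 2 := abs_le.mpr ⟨by linarith [hx.1, hx₀.1], by linarith [hx.2, hx₀.2]⟩
  have hsq : |x ^ 2 + x₀ ^ 2 - 2| ≤ 2 :=
    abs_le.mpr ⟨by nlinarith [hx.1, hx₀.1], by nlinarith [hx.1, hx.2, hx₀.1, hx₀.2]⟩
  have := le_abs_self ((1 - x ^ 2) ^ 2 - (1 - x₀ ^ 2) ^ 2)
  rw [hdiff, abs_mul, abs_mul] at this
  nlinarith [mul_le_mul hsum hsq (abs_nonneg _) zero_le_two, abs_nonneg (x - x₀),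
    mul_nonneg (abs_nonneg (x - x₀)) (abs_nonneg (x + x₀))]

noncomputable def scaledStep (η k x₀ κ x : ℝ) : ℝ := η * arctanStep k (x - x₀) - κ

section ScaledStep

variable {η k x₀ κ : ℝ}

lemma contDiff_scaledStep : ContDiff ℝ (⊤ : ℕ∞) (scaledStep η k x₀ κ) :=
  (contDiff_const.mul ((contDiff_arctanStep k).comp (contDiff_id.sub contDiff_const))).sub
    contDiff_const

lemma deriv_scaledStep (x : ℝ) :
    deriv (scaledStep η k x₀ κ) x = η * deriv (arctanStep k) (x - x₀) := by
  have h := (((hasDerivAt_arctanStep k (x - x₀)).comp_sub_const x x₀).const_mul η).sub_const κ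
  rw [deriv_arctanStep]
  exact h.deriv

lemma abs_scaledStep_le (hη : 0 ≤ η) (hκ : κ ∈ Icc 0 η) (x : ℝ) :
    |scaledStep η k x₀ κ x| ≤ η := by
  have ⟨h₀, h₁⟩ := arctanStep_mem_Ioo k (x - x₀)
  rw [scaledStep, abs_le]
  constructor <;> nlinarith [hκ.1, hκ.2]

lemma deriv_scaledStep_nonneg (hη : 0 ≤ η) (hk : 0 ≤ k) (x : ℝ) :
    0 ≤ deriv (scaledStep η k x₀ κ) x := by
  rw [deriv_scaledStep]
  exact mul_nonneg hη (deriv_arctanStep_nonneg hk _)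

lemma one_sub_sq_sq_mul_deriv_scaledStep_le (hη : 0 ≤ η) (hk : 0 ≤ k) {x : ℝ}
    (hx : x ∈ Icc (-1) 1) (hx₀ : x₀ ∈ Icc (-1) 1) :
    (1 - x ^ 2) ^ 2 * deriv (scaledStep η k x₀ κ) x ≤ (1 - x₀ ^ 2) ^ 2 * η * k / π + η := by
  rw [deriv_scaledStep]
  have hd := deriv_arctanStep_nonneg hk (x - x₀)
  have hmax := deriv_arctanStep_le hk (x - x₀)
  have hdecay : 4 * |x - x₀| * deriv (arctanStep k) (x - x₀) ≤ 1 := by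
    have := abs_mul_deriv_arctanStep_le hk (x - x₀)
    have : 4 * (1 / (2 * π)) ≤ 1 := by
      rw [mul_one_div, div_le_one (by positivity)]
      linarith [pi_gt_three]
    nlinarith
  calc (1 - x ^ 2) ^ 2 * (η * deriv (arctanStep k) (x - x₀))
      ≤ ((1 - x₀ ^ 2) ^ 2 + 4 * |x - x₀|) * (η * deriv (arctanStep k) (x - x₀)) := by
        gcongr
        exact one_sub_sq_sq_le hx hx₀
    _ = η * ((1 - x₀ ^ 2) ^ 2 * deriv (arctanStep k) (x - x₀)
          + 4 * |x - x₀| * deriv (arctanStep k) (x - x₀)) := by ring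
    _ ≤ η * ((1 - x₀ ^ 2) ^ 2 * (k / π) + 1) := by gcongr
    _ = (1 - x₀ ^ 2) ^ 2 * η * k / π + η := by ring

lemma one_sub_sq_sq_mul_deriv_scaledStep_le_of_le_sub (hk : 0 < k) {x ρ : ℝ}
    (hx : x ∈ Icc (-1) 1) (hρ : 0 < ρ) (hxρ : x ≤ x₀ - ρ) (hkρ : 4 * η ≤ π * k * ρ ^ 2) :
    (1 - x ^ 2) ^ 2 * deriv (scaledStep η k x₀ κ) x ≤ (1 + x) / 2 := by
  rw [deriv_scaledStep]
  have hd := deriv_arctanStep_nonneg hk.le (x - x₀)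
  have hsmall : η * deriv (arctanStep k) (x - x₀) ≤ 1 / 4 := by
    have hdecay := sq_mul_deriv_arctanStep_le hk (x - x₀)
    have hρsq : ρ ^ 2 ≤ (x - x₀) ^ 2 := by nlinarith
    rw [le_div_iff₀ (by positivity)] at hdecay
    nlinarith [mul_le_mul_of_nonneg_right hρsq hd, mul_pos pi_pos hk]
  have hweight : (1 - x ^ 2) ^ 2 ≤ 2 * (1 + x) := by
    have h₀ : 0 ≤ 1 - x ^ 2 := by nlinarith [hx.1, hx.2]
    have h₁ : 1 - x ^ 2 ≤ 1 := by nlinarith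
    nlinarith [mul_le_of_le_one_left h₀ h₁, hx.1, hx.2]
  nlinarith [sq_nonneg (1 - x ^ 2)]

lemma abs_profileSlope_scaledStep_lt_one (hη : 0 ≤ η) (hη_small : η < 1 / 12) (hk : 0 < k)
    (hκ : κ ∈ Icc 0 η) (hx₀ : x₀ ∈ Icc (-1) 1) {ρ : ℝ} (hρ : 0 < ρ)
    (hkρ : 4 * η ≤ π * k * ρ ^ 2) (hpeak : (1 - x₀ ^ 2) ^ 2 * η * k / π + 4 * η + ρ < 1 + x₀)
    {x : ℝ} (hx : x ∈ Ioo (-1) 1) : |profileSlope (scaledStep η k x₀ κ) x| < 1 := by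
  have hxI : x ∈ Icc (-1) 1 := Ioo_subset_Icc_self hx
  refine abs_profileSlope_lt_one hx (by linarith) (abs_scaledStep_le hη hκ x)
    (deriv_scaledStep_nonneg hη hk.le x) ?_
  have hweight : 0 ≤ 1 - x ^ 2 := by nlinarith [hx.1, hx.2]
  rcases le_or_gt x (x₀ - ρ) with hfar | hnear
  · have := one_sub_sq_sq_mul_deriv_scaledStep_le_of_le_sub (κ := κ) hk hxI hρ hfar hkρ
    nlinarith [hx.1, hx.2]
  · have := one_sub_sq_sq_mul_deriv_scaledStep_le (κ := κ) hη hk.le hxI hx₀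
    nlinarith

lemma profileSlope_scaledStep_self_le (hη : 0 ≤ η) (hκ : κ ∈ Icc 0 η) (hx₀ : x₀ ∈ Icc (-1) 1) :
    profileSlope (scaledStep η k x₀ κ) x₀ ≤ x₀ + 3 * η - (1 - x₀ ^ 2) ^ 2 * η * k / π := by
  have hcubic :=
    (abs_le.mp (abs_cubic_term_le hx₀ (abs_scaledStep_le (k := k) (x₀ := x₀) hη hκ x₀))).2
  have hweight : 0 ≤ x₀ ^ 2 := sq_nonneg x₀
  have hpeak : deriv (arctanStep k) (x₀ - x₀) = k / π := by
    rw [sub_self, deriv_arctanStep]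
    simp
  rw [profileSlope, deriv_scaledStep, hpeak]
  have : (1 - x₀ ^ 2) ^ 2 * (η * (k / π)) = (1 - x₀ ^ 2) ^ 2 * η * k / π := by ring
  nlinarith [mul_nonneg hη hweight]

end ScaledStep

theorem exists_profileSlope_lt {ε x₀ : ℝ} (hε : ε ∈ Ioo 0 1) (hx₀ : x₀ ∈ Ioo 0 1) :
    ∃ h : ℝ → ℝ, ContDiff ℝ (⊤ : ℕ∞) h ∧ (∀ x ∈ Ioo (-1) 1, -1 < h x) ∧
      (∀ x ∈ Ioo (-1) 1, |profileSlope h x| < 1) ∧ ∫ x in (-1)..1, (1 - x ^ 2) * h x = 0 ∧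
      profileSlope h x₀ < -ε := by
  obtain ⟨hε₀, hε₁⟩ := hε
  obtain ⟨hx₀₀, hx₀₁⟩ := hx₀
  set η := (1 - ε) / 16 with hη_def
  set ρ := (1 - ε) / 4 with hρ_def
  set D := x₀ + ε + 4 * η
  -- the slope making the peak of `(1 - x²)² h'` at `x₀` equal to `D`
  set k := π * D / (η * (1 - x₀ ^ 2) ^ 2) with hk_def
  set κ := parabolicMean fun x ↦ η * arctanStep k (x - x₀)
  have hstep : Continuous fun x ↦ η * arctanStep k (x - x₀) :=
    continuous_const.mul ((contDiff_arctanStep k).continuous.comp (continuous_sub_right x₀))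
  have hη : 0 < η := by positivity
  have hA : 0 < 1 - x₀ ^ 2 := by nlinarith
  have hD : 1 / 4 ≤ D := by linarith
  have hkD : (1 - x₀ ^ 2) ^ 2 * η * k / π = D := by
    rw [hk_def]
    field_simp
  have hk : 0 < k := by positivity
  have hkρ : 4 * η ≤ π * k * ρ ^ 2 := by
    have hk' : π * D / η ≤ k :=
      div_le_div_of_nonneg_left (by positivity) (by positivity)
        (mul_le_of_le_one_right hη.le (by nlinarith))
    have hβ : 0 < 1 - ε := by linarith
    have hk'ρ : 4 * η ≤ π * (π * D / η) * ρ ^ 2 := by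
      rw [hη_def, hρ_def]
      field_simp
      nlinarith [pi_gt_three, mul_pos hβ hβ]
    exact hk'ρ.trans (by gcongr)
  have hκ : κ ∈ Icc 0 η := parabolicMean_mem_Icc hstep fun x _ ↦
    have ⟨h₀, h₁⟩ := arctanStep_mem_Ioo k (x - x₀)
    ⟨by positivity, mul_le_of_le_one_right hη.le h₁.le⟩
  have hx₀I : x₀ ∈ Icc (-1) 1 := ⟨by linarith, hx₀₁.le⟩
  refine ⟨scaledStep η k x₀ κ, contDiff_scaledStep, fun x _ ↦ ?_,
    fun x hx ↦ abs_profileSlope_scaledStep_lt_one hη.le (by linarith) hk hκ hx₀I (by positivity)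
      hkρ (by linarith) hx,
    integral_one_sub_sq_mul_sub_parabolicMean hstep, ?_⟩
  · linarith [(abs_le.mp (abs_scaledStep_le (k := k) (x₀ := x₀) hη.le hκ x)).1]
  · linarith [profileSlope_scaledStep_self_le (k := k) hη.le hκ hx₀I]

/-- For every `ε ∈ (0,1)` and every `δ ∈ (0, π/2)` there exist `ℓ > δ`
and a normalized profile function `γ` of length `ℓ` with `γ' δ < −ε`. -/
theorem stmt_11 (ε δ : ℝ) (hε : ε ∈ Set.Ioo 0 1) (hδ : δ ∈ Set.Ioo 0 (Real.pi / 2)) :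
    ∃ ℓ : ℝ, ∃ γ : ℝ → ℝ, δ < ℓ ∧ IsProfileFunction ℓ γ ∧ IsNormalizedProfile ℓ γ ∧
      deriv γ δ < -ε := by
  obtain ⟨hδ₀, hδ₁⟩ := hδ
  have hcos : cos δ ∈ Ioo 0 1 :=
    ⟨cos_pos_of_mem_Ioo ⟨by linarith, hδ₁⟩, (cos_mem_Ioo_of_mem_Ioo ⟨hδ₀, by linarith⟩).2⟩
  obtain ⟨h, hsmooth, hgt, hslope, hint, hdip⟩ := exists_profileSlope_lt hε hcos
  refine ⟨π, profileOf h, by linarith [pi_pos], isProfileFunction_profileOf hsmooth hgt hslope,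
    ?_, ?_⟩
  · rw [IsNormalizedProfile, integral_profileOf hsmooth.continuous, hint, add_zero]
  · rwa [deriv_profileOf (hsmooth.differentiable (by simp))]
end

section
/- Let J be the 2×2 real matrix with rows (0, −1) and (1, 0), let ρ : ℝ → M₂(ℝ) be a map into the 2×2 real matrices, let ψ : ℝ → ℝ² be differentiable with ψ(t) ≠ 0 and ψ'(t) = (J + ρ(t))·ψ(t) for all t, and let θ : ℝ → ℝ be a differentiable function with ψ(t) = ‖ψ(t)‖·(cos θ(t), sin θ(t)) for all t. Then θ'(t) ≥ 1 − ‖ρ(t)‖ for every t, where ‖ρ(t)‖ denotes the operator norm of ρ(t) on Euclidean ℝ². -/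
/-!
Writing `ψ = r (cos θ, sin θ)` and differentiating gives the polar identity
`r² θ' = ψ₀ ψ₁' - ψ₁ ψ₀' = ⟪J ψ, ψ'⟫`. Substituting `ψ' = J ψ + ρ ψ`, the rotation part contributes
`⟪J ψ, J ψ⟫ = r²` and, by Cauchy–Schwarz, the perturbation part is at least `-‖ρ‖ r²`.
-/

noncomputable def Jmat : Matrix (Fin 2) (Fin 2) ℝ := !![0, -1; 1, 0]

open Real

lemma sq_mul_deriv_angle_eq_cross {x y r θ : ℝ → ℝ} {t x' y' r' θ' : ℝ}
    (hx : HasDerivAt x x' t) (hy : HasDerivAt y y' t)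
    (hr : HasDerivAt r r' t) (hθ : HasDerivAt θ θ' t)
    (hx_polar : x = fun s => r s * cos (θ s)) (hy_polar : y = fun s => r s * sin (θ s)) :
    r t ^ 2 * θ' = x t * y' - y t * x' := by
  have hx' : x' = r' * cos (θ t) + r t * (-sin (θ t) * θ') :=
    hx.unique (hx_polar ▸ hr.mul ((hasDerivAt_cos _).comp t hθ))
  have hy' : y' = r' * sin (θ t) + r t * (cos (θ t) * θ') :=
    hy.unique (hy_polar ▸ hr.mul ((hasDerivAt_sin _).comp t hθ))
  subst hx_polar hy_polar hx' hy'
  linear_combination (-(r t ^ 2 * θ')) * sin_sq_add_cos_sq (θ t)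

lemma one_sub_opNorm_mul_sq_le_inner {E : Type*} [NormedAddCommGroup E] [InnerProductSpace ℝ E]
    (J A : E →L[ℝ] E) (hJ : ∀ v, ‖J v‖ = ‖v‖) (v : E) :
    (1 - ‖A‖) * ‖v‖ ^ 2 ≤ inner ℝ (J v) ((J + A) v) := by
  have hcross : -(‖A‖ * ‖v‖ ^ 2) ≤ inner ℝ (J v) (A v) :=
    calc -(‖A‖ * ‖v‖ ^ 2) = -(‖J v‖ * (‖A‖ * ‖v‖)) := by rw [hJ]; ring
      _ ≤ -(‖J v‖ * ‖A v‖) := by gcongr; exact A.le_opNorm v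
      _ ≤ inner ℝ (J v) (A v) := neg_le_of_abs_le (abs_real_inner_le_norm _ _)
  rw [add_apply, inner_add_right, real_inner_self_eq_norm_sq, hJ]
  linarith

lemma toEuclideanCLM_Jmat_apply (v : EuclideanSpace ℝ (Fin 2)) :
    Matrix.toEuclideanCLM (𝕜 := ℝ) Jmat v = !₂[-v 1, v 0] := by
  ext i
  fin_cases i <;> simp [Jmat, Matrix.mulVec, dotProduct]

lemma inner_toEuclideanCLM_Jmat (v w : EuclideanSpace ℝ (Fin 2)) :
    inner ℝ (Matrix.toEuclideanCLM (𝕜 := ℝ) Jmat v) w = v 0 * w 1 - v 1 * w 0 := by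
  simp only [toEuclideanCLM_Jmat_apply, EuclideanSpace.inner_eq_star_dotProduct]
  simp [dotProduct, Fin.sum_univ_two]
  ring

lemma norm_toEuclideanCLM_Jmat_apply (v : EuclideanSpace ℝ (Fin 2)) :
    ‖Matrix.toEuclideanCLM (𝕜 := ℝ) Jmat v‖ = ‖v‖ := by
  simp [toEuclideanCLM_Jmat_apply, EuclideanSpace.norm_eq, Fin.sum_univ_two, add_comm]

/-- If `ψ : ℝ → ℝ²` is nonvanishing and solves `ψ' = (J + ρ(t)) ψ`,
and `θ` is a differentiable angular function for `ψ`, i.e.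
`ψ t = ‖ψ t‖ • (cos (θ t), sin (θ t))`, then `θ' t ≥ 1 − ‖ρ t‖`, where `‖ρ t‖` is
the operator norm of `ρ t` acting on Euclidean `ℝ²`. -/
theorem stmt_14 (ρ : ℝ → Matrix (Fin 2) (Fin 2) ℝ)
    (ψ : ℝ → EuclideanSpace ℝ (Fin 2)) (θ : ℝ → ℝ)
    (hψ_ne : ∀ t : ℝ, ψ t ≠ 0)
    (hψ : ∀ t : ℝ, HasDerivAt ψ
      ((Matrix.toEuclideanCLM (𝕜 := ℝ) (Jmat + ρ t)) (ψ t)) t)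
    (hθ_diff : ∀ t : ℝ, DifferentiableAt ℝ θ t)
    (hθ : ∀ t : ℝ, ψ t 0 = ‖ψ t‖ * Real.cos (θ t) ∧
      ψ t 1 = ‖ψ t‖ * Real.sin (θ t)) :
    ∀ t : ℝ, 1 - ‖Matrix.toEuclideanCLM (𝕜 := ℝ) (ρ t)‖ ≤ deriv θ t := by
  intro t
  set J := Matrix.toEuclideanCLM (𝕜 := ℝ) Jmat
  set A := Matrix.toEuclideanCLM (𝕜 := ℝ) (ρ t)
  have hψ' : HasDerivAt ψ ((J + A) (ψ t)) t := by
    simpa only [J, A, map_add] using hψ t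
  have hcoord (i : Fin 2) : HasDerivAt (fun s => ψ s i) ((J + A) (ψ t) i) t :=
    (EuclideanSpace.proj (𝕜 := ℝ) i).hasFDerivAt.comp_hasDerivAt t hψ'
  have hpolar : ‖ψ t‖ ^ 2 * deriv θ t = inner ℝ (J (ψ t)) ((J + A) (ψ t)) := by
    rw [inner_toEuclideanCLM_Jmat]
    exact sq_mul_deriv_angle_eq_cross (hcoord 0) (hcoord 1)
      ((hψ t).differentiableAt.norm ℝ (hψ_ne t)).hasDerivAt (hθ_diff t).hasDerivAt
      (funext fun s => (hθ s).1) (funext fun s => (hθ s).2)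
  have hr : 0 < ‖ψ t‖ ^ 2 := pow_pos (norm_pos_iff.2 (hψ_ne t)) 2
  refine le_of_mul_le_mul_left ?_ hr
  rw [mul_comm, hpolar]
  exact one_sub_opNorm_mul_sq_le_inner J A norm_toEuclideanCLM_Jmat_apply (ψ t)
end

section
/- Let ℍ denote the real quaternions with units i, j, k, conjugation a ↦ conj(a), real part Re, and inner product ⟨a, b⟩ := Re(a·conj(b)). Then for every unit quaternion U (i.e., |U| = 1) and every W ∈ ℍ, the identity ⟨ conj(U)·j·W − conj(U)·W·conj(U)·j·U , conj(U)·k·U ⟩ = −2·⟨ i·U, W ⟩ holds. -/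
open Quaternion RealInnerProductSpace

/-- The quaternion unit `i`. -/
noncomputable def qI : ℍ[ℝ] := ⟨0, 1, 0, 0⟩

/-- The quaternion unit `j`. -/
noncomputable def qJ : ℍ[ℝ] := ⟨0, 0, 1, 0⟩

/-- The quaternion unit `k`. -/
noncomputable def qK : ℍ[ℝ] := ⟨0, 0, 0, 1⟩

/-!
Write `W = X * U` with `X = W * conj U`. Since `U * conj U = 1`, the first argument becomes
`conj U * (j * X - X * j) * U`, and conjugation by a unit quaternion is an isometry, so the left
side is `⟨j * X - X * j, k⟩ = -2 X.imI`. Right multiplication by `U` is an isometry as well, so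
the right side is `-2 ⟨i, X⟩ = -2 X.imI`.
-/

namespace Quaternion

theorem re_mul_comm {R : Type*} [CommRing R] (a b : ℍ[R]) : (a * b).re = (b * a).re := by
  simp only [re_mul]
  ring

theorem normSq_eq_one_of_norm_eq_one {u : ℍ[ℝ]} (hu : ‖u‖ = 1) : normSq u = 1 := by
  rw [normSq_eq_norm_mul_self, hu, mul_one]

theorem inner_mul_mul_right (a b c : ℍ[ℝ]) : ⟪a * c, b * c⟫ = ‖c‖ ^ 2 * ⟪a, b⟫ := by
  rw [inner_def, inner_def, star_mul, mul_assoc, ← mul_assoc c, self_mul_star, coe_mul_eq_smul,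
    mul_smul_comm, re_smul, smul_eq_mul, normSq_eq_norm_mul_self, sq]

theorem inner_mul_mul_left (a b c : ℍ[ℝ]) : ⟪c * a, c * b⟫ = ‖c‖ ^ 2 * ⟪a, b⟫ := by
  rw [inner_def, inner_def, star_mul, re_mul_comm, mul_assoc, ← mul_assoc (star c), star_mul_self,
    coe_mul_eq_smul, mul_smul_comm, re_smul, smul_eq_mul, re_mul_comm, normSq_eq_norm_mul_self, sq]

theorem inner_star_mul_mul_of_norm_eq_one {u : ℍ[ℝ]} (hu : ‖u‖ = 1) (a b : ℍ[ℝ]) :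
    ⟪star u * a * u, star u * b * u⟫ = ⟪a, b⟫ := by
  rw [inner_mul_mul_right, inner_mul_mul_left, norm_star, hu, one_pow, one_mul, one_mul]

end Quaternion

theorem inner_qJ_mul_sub_mul_qJ_qK (x : ℍ[ℝ]) : ⟪qJ * x - x * qJ, qK⟫ = -2 * ⟪qI, x⟫ := by
  simp only [inner_def, re_mul, imI_mul, imJ_mul, imK_mul, re_sub, imI_sub, imJ_sub, imK_sub,
    re_star, imI_star, imJ_star, imK_star]
  simp only [qI, qJ, qK]
  ring

/-- For every unit quaternion `U` and every `W ∈ ℍ`,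
`⟨ conj U * j * W − conj U * W * (conj U * j * U), conj U * k * U ⟩ = −2 ⟨ i * U, W ⟩`,
where `⟨a, b⟩ = Re (a * conj b)` is the real inner product on the quaternions and
conjugation is `star`. -/
theorem stmt_15 (U W : ℍ[ℝ]) (hU : ‖U‖ = 1) :
    ⟪star U * qJ * W - star U * W * (star U * qJ * U), star U * qK * U⟫ =
      -2 * ⟪qI * U, W⟫ := by
  have hUU : U * star U = 1 := by rw [self_mul_star, normSq_eq_one_of_norm_eq_one hU, coe_one]
  obtain ⟨X, rfl⟩ : ∃ X, W = X * U :=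
    ⟨W * star U, by rw [mul_assoc, star_mul_self, normSq_eq_one_of_norm_eq_one hU, coe_one, mul_one]⟩
  have hcomm : star U * qJ * (X * U) - star U * (X * U) * (star U * qJ * U) =
      star U * (qJ * X - X * qJ) * U := by
    simp only [mul_sub, sub_mul, mul_assoc]
    rw [← mul_assoc U (star U), hUU, one_mul]
  rw [hcomm, inner_star_mul_mul_of_norm_eq_one hU, inner_qJ_mul_sub_mul_qJ_qK,
    inner_mul_mul_right, hU, one_pow, one_mul]
end
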